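/- arXiv:2506.05650 — 9 statements merged into one kernel-verified Lean document; each statement's English description precedes it below -/
import Mathlib

section
/- Let G be a finite group and V a finite-dimensional faithful representation of G over a field k whose characteristic does not divide |G|. If d is a natural number such that k[V]_{≤d} spans k(V) as a vector space over K = k(V)^G, then K is generated as a field extension of k by the invariant polynomials of degree at most 2d+1. In particular, β_field(G,V) ≤ 2·D_span(G,V) + 1. -/
/-!
Let `L = k(V)`, `K = L^G` and `T x = ∑ g • x`. Then `T : L → K` is `K`-linear with
`T 1 = |G| ≠ 0`, so `(x, y) ↦ T (x * y)` is a nondegenerate `K`-bilinear form on `L`. Choose a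
`K`-basis `b` of `L` of polynomials of degree `≤ d`, and let `K'` be the field generated by the
invariant polynomials of degree `≤ 2d + 1`. The Gram matrix `T (bᵢ * bⱼ)` has entries in `K'`, hence
so does its inverse, so any `x` with all `T (bᵢ * x) ∈ K'` has its `b`-coordinates in `K'`. For
`x = X_l * bⱼ` the pairings are orbit sums of polynomials of degree `≤ 2d + 1`, so the `K'`-span
`M` of `b` is stable under multiplication by polynomials. As `M` is finite-dimensional over `K'`,
multiplication by a nonzero polynomial is bijective on it, so `M = L`. Finally each `f ∈ K`
is `|G|⁻¹ T f`, and `T` maps `M` into `K'`.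
-/

open MvPolynomial

theorem RingHom.mapMatrix_inv {n K L : Type*} [Fintype n] [DecidableEq n] [Field K] [Field L]
    (f : K →+* L) (A : Matrix n n K) : f.mapMatrix A⁻¹ = (f.mapMatrix A)⁻¹ := by
  rw [Matrix.inv_def, Matrix.inv_def, ← RingHom.map_adjugate, ← RingHom.map_det,
    Ring.inverse_eq_inv']
  ext i j
  simp

theorem Matrix.inv_apply_mem_of_forall_mem {n K : Type*} [Fintype n] [DecidableEq n] [Field K]
    (F : Subfield K) {A : Matrix n n K} (hA : ∀ i j, A i j ∈ F) (i j : n) : A⁻¹ i j ∈ F := by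
  obtain ⟨A₀, rfl⟩ : ∃ A₀ : Matrix n n F, F.subtype.mapMatrix A₀ = A :=
    ⟨Matrix.of fun i j => ⟨A i j, hA i j⟩, rfl⟩
  rw [← RingHom.mapMatrix_inv]
  exact (A₀⁻¹ i j).2

section TraceForm

open Matrix

variable {K L ι : Type*} [Field K] [Field L] [Algebra K L] (b : Module.Basis ι K L)
  {τ : L →ₗ[K] K}

theorem Module.Basis.eq_zero_of_forall_apply_mul_eq_zero (hτ : τ ≠ 0) {y : L}
    (hy : ∀ i, τ (b i * y) = 0) : y = 0 := by
  have hzero : τ ∘ₗ LinearMap.mulRight K y = 0 := b.ext hy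
  by_contra hy0
  refine hτ (LinearMap.ext fun z => ?_)
  simpa [hy0] using LinearMap.congr_fun hzero (z * y⁻¹)

theorem Module.Basis.mulVec_repr [Fintype ι] (y : L) :
    (of fun i j => τ (b i * b j)) *ᵥ b.repr y = fun i => τ (b i * y) := by
  ext i
  conv_rhs => rw [← b.sum_repr y]
  simp only [mulVec, dotProduct, of_apply, Finset.mul_sum, mul_smul_comm, map_sum, map_smul,
    smul_eq_mul]
  exact Finset.sum_congr rfl fun _ _ => mul_comm _ _

theorem Module.Basis.repr_mem_of_forall_mem [Fintype ι] [DecidableEq ι] (hτ : τ ≠ 0)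
    (F : Subfield K) (hgram : ∀ i j, τ (b i * b j) ∈ F) {x : L} (hx : ∀ i, τ (b i * x) ∈ F)
    (j : ι) : b.repr x j ∈ F := by
  have hunit : IsUnit (of fun i j => τ (b i * b j)).det := by
    refine (isUnit_iff_isUnit_det _).mp (mulVec_injective_iff_isUnit.mp fun v w hvw => ?_)
    obtain ⟨y, rfl⟩ := b.equivFun.surjective v
    obtain ⟨z, rfl⟩ := b.equivFun.surjective w
    simp only [Module.Basis.equivFun_apply, b.mulVec_repr] at hvw ⊢
    suffices y - z = 0 by rw [sub_eq_zero.mp this]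
    refine b.eq_zero_of_forall_apply_mul_eq_zero hτ fun i => ?_
    rw [mul_sub, map_sub, congr_fun hvw i, sub_self]
  have hrepr : b.repr x = (of fun i j => τ (b i * b j))⁻¹ *ᵥ fun i => τ (b i * x) := by
    rw [← b.mulVec_repr, mulVec_mulVec, nonsing_inv_mul _ hunit, one_mulVec]
  rw [hrepr]
  exact F.sum_mem fun i _ => F.mul_mem (inv_apply_mem_of_forall_mem F hgram j i) (hx i)

end TraceForm

theorem smul_sum_smul {G M : Type*} [Group G] [Fintype G] [AddCommMonoid M]
    [DistribMulAction G M] (h : G) (x : M) : h • ∑ g : G, g • x = ∑ g : G, g • x := by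
  simp_rw [Finset.smul_sum, smul_smul]
  exact Fintype.sum_equiv (Equiv.mulLeft h) _ _ fun _ => rfl

theorem Submodule.mul_mem_span_of_forall_mul_mem {R A : Type*} [CommSemiring R] [Semiring A]
    [Algebra R A] {s : Set A} {y : A} (hs : ∀ x ∈ s, y * x ∈ Submodule.span R s) {m : A}
    (hm : m ∈ Submodule.span R s) : y * m ∈ Submodule.span R s :=
  (Submodule.span_le (p := (Submodule.span R s).comap (LinearMap.mulLeft R y))).mpr hs hm

theorem Submodule.eq_top_of_forall_algebraMap_mul_mem {R F L : Type*} [CommRing R] [Nontrivial R]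
    [Field F] [Field L] [Algebra R L] [IsFractionRing R L] [Algebra F L] {M : Submodule F L}
    (hM_fg : M.FG) (hM : M ≠ ⊥) (hmul : ∀ r : R, ∀ m ∈ M, algebraMap R L r * m ∈ M) :
    M = ⊤ := by
  have := Module.Finite.iff_fg.mpr hM_fg
  have hdiv : ∀ r : R, algebraMap R L r ≠ 0 → ∀ y ∈ M, ∃ m ∈ M, algebraMap R L r * m = y := by
    intro r hr y hy
    have hinj : Function.Injective ((LinearMap.mulLeft F (algebraMap R L r)).restrict (hmul r)) :=
      fun m m' h => Subtype.ext (mul_left_cancel₀ hr (congrArg Subtype.val h))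
    obtain ⟨m, hm⟩ := LinearMap.injective_iff_surjective.mp hinj ⟨y, hy⟩
    exact ⟨m, m.2, congrArg Subtype.val hm⟩
  obtain ⟨m₀, hm₀, hm₀_ne⟩ := Submodule.exists_mem_ne_zero_of_ne_bot hM
  refine eq_top_iff.mpr fun z _ => ?_
  obtain ⟨a, s, hs, hz⟩ := IsFractionRing.div_surjective R (z / m₀)
  have hs0 : algebraMap R L s ≠ 0 := IsFractionRing.to_map_ne_zero_of_mem_nonZeroDivisors hs
  obtain ⟨m, hm, hsm⟩ := hdiv s hs0 _ (hmul a m₀ hm₀)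
  have hmz : m = z := by
    rw [eq_div_of_mul_eq hs0 ((mul_comm _ _).trans hsm), mul_div_right_comm, hz,
      div_mul_cancel₀ _ hm₀_ne]
  exact hmz ▸ hm

section OrbitSum

variable (G L : Type*) [Group G] [Fintype G] [Field L] [MulSemiringAction G L]

local notation "Lᴳ" => FixedPoints.subfield G L

def orbitSum : L →ₗ[Lᴳ] Lᴳ where
  toFun x := ⟨∑ g : G, g • x, fun h => smul_sum_smul h x⟩
  map_add' x y := Subtype.ext (by simp [smul_add, Finset.sum_add_distrib])
  map_smul' c x := Subtype.ext (by simp [Subfield.smul_def, smul_mul', Finset.mul_sum, c.2 _])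

variable {G L}

@[simp]
theorem coe_orbitSum (x : L) : (orbitSum G L x : L) = ∑ g : G, g • x := rfl

theorem coe_orbitSum_of_mem {x : L} (hx : x ∈ Lᴳ) :
    (orbitSum G L x : L) = Fintype.card G * x := by
  rw [coe_orbitSum, Finset.sum_congr rfl fun g _ => hx g]
  simp

theorem orbitSum_ne_zero (hG : (Fintype.card G : L) ≠ 0) : orbitSum G L ≠ 0 := by
  intro h
  apply hG
  simpa using congrArg Subtype.val (LinearMap.congr_fun h 1)

theorem mem_span_of_forall_orbitSum_mul_mem (hG : (Fintype.card G : L) ≠ 0) {ι : Type*}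
    [Finite ι] (b : Module.Basis ι Lᴳ L) (F : Subfield L)
    (hgram : ∀ i j, (orbitSum G L (b i * b j) : L) ∈ F) {x : L}
    (hx : ∀ i, (orbitSum G L (b i * x) : L) ∈ F) : x ∈ Submodule.span F (Set.range b) := by
  classical
  have := Fintype.ofFinite ι
  rw [← b.sum_repr x]
  refine Submodule.sum_mem _ fun j _ => ?_
  have hj := b.repr_mem_of_forall_mem (orbitSum_ne_zero hG) (F.comap Lᴳ.subtype) hgram hx j
  exact Submodule.smul_mem _ (⟨_, hj⟩ : F) (Submodule.subset_span ⟨j, rfl⟩)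

theorem orbitSum_mem_of_mem_span {F : Subfield L} (hF : F ≤ Lᴳ) {s : Set L}
    (hs : ∀ x ∈ s, (orbitSum G L x : L) ∈ F) {x : L} (hx : x ∈ Submodule.span F s) :
    (orbitSum G L x : L) ∈ F := by
  induction hx using Submodule.span_induction with
  | mem x hx => exact hs x hx
  | zero => simp
  | add x y _ _ hx hy => simpa using F.add_mem hx hy
  | smul c x _ hx =>
    have hc : c • x = (⟨c, hF c.2⟩ : Lᴳ) • x := rfl
    rw [hc, map_smul]
    exact F.mul_mem c.2 hx

theorem mem_of_orbitSum_mem (hG : (Fintype.card G : L) ≠ 0) (F : Subfield L) {x : L}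
    (hx : x ∈ Lᴳ) (hsum : (orbitSum G L x : L) ∈ F) : x ∈ F := by
  rw [coe_orbitSum_of_mem hx] at hsum
  simpa [hG] using F.mul_mem (F.inv_mem (natCast_mem F (Fintype.card G))) hsum

end OrbitSum

theorem MvPolynomial.totalDegree_aeval_le_of_isHomogeneous {σ τ R : Type*} [CommSemiring R]
    {g : σ → MvPolynomial τ R} (hg : ∀ i, (g i).IsHomogeneous 1) (p : MvPolynomial σ R) :
    (aeval g p).totalDegree ≤ p.totalDegree := by
  conv_lhs => rw [← sum_homogeneousComponent p]
  rw [map_sum]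
  refine (totalDegree_finsetSum _ _).trans (Finset.sup_le fun m hm => ?_)
  have hdeg := ((homogeneousComponent_isHomogeneous m p).aeval g hg).totalDegree_le
  rw [one_mul] at hdeg
  exact hdeg.trans (Finset.mem_range_succ_iff.mp hm)

theorem MvPolynomial.totalDegree_smul_le_of_isHomogeneous_smul_X {k σ G : Type*} [CommSemiring k]
    [Monoid G] [MulSemiringAction G (MvPolynomial σ k)] [SMulCommClass G k (MvPolynomial σ k)]
    (hlin : ∀ (g : G) i, (g • (X i : MvPolynomial σ k)).IsHomogeneous 1) (g : G)
    (p : MvPolynomial σ k) : (g • p).totalDegree ≤ p.totalDegree := by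
  have hg : g • p = aeval (fun i => g • (X i : MvPolynomial σ k)) p :=
    congrArg (· p) (aeval_unique (MulSemiringAction.toAlgHom k _ g))
  rw [hg]
  exact totalDegree_aeval_le_of_isHomogeneous (hlin g) p

noncomputable def closureInvariantsDegLE (k σ G : Type*) [Field k] [SMul G (MvPolynomial σ k)]
    (e : ℕ) : Subfield (FractionRing (MvPolynomial σ k)) :=
  Subfield.closure (Set.range (algebraMap k _) ∪ algebraMap (MvPolynomial σ k) _ ''
    {p | p.totalDegree ≤ e ∧ ∀ g : G, g • p = p})

section Invariants

variable {k σ G : Type*} [Field k]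

local notation "P" => MvPolynomial σ k
local notation "L" => FractionRing (MvPolynomial σ k)
local notation "φ" => algebraMap (MvPolynomial σ k) (FractionRing (MvPolynomial σ k))

theorem closureInvariantsDegLE_le_fixedPoints [Monoid G] [MulSemiringAction G P]
    [SMulCommClass G k P] [MulSemiringAction G L] (hcomp : ∀ (g : G) (p : P), g • φ p = φ (g • p))
    (e : ℕ) : closureInvariantsDegLE k σ G e ≤ FixedPoints.subfield G L := by
  rw [closureInvariantsDegLE, Subfield.closure_le]
  rintro _ (⟨c, rfl⟩ | ⟨p, ⟨-, hp⟩, rfl⟩) g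
  · rw [IsScalarTower.algebraMap_apply k P L, hcomp, smul_algebraMap]
  · rw [hcomp, hp g]

theorem coe_orbitSum_algebraMap_mem_closureInvariantsDegLE [Group G] [Fintype G]
    [MulSemiringAction G P] [SMulCommClass G k P] [MulSemiringAction G L]
    (hlin : ∀ (g : G) i, (g • (X i : P)).IsHomogeneous 1)
    (hcomp : ∀ (g : G) (p : P), g • φ p = φ (g • p)) {e : ℕ} {p : P} (hp : p.totalDegree ≤ e) :
    (orbitSum G L (φ p) : L) ∈ closureInvariantsDegLE k σ G e := by
  refine Subfield.subset_closure (Or.inr ⟨∑ g : G, g • p, ⟨?_, fun h => smul_sum_smul h p⟩, ?_⟩)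
  · exact (totalDegree_finsetSum _ _).trans (Finset.sup_le fun g _ =>
      (totalDegree_smul_le_of_isHomogeneous_smul_X hlin g p).trans hp)
  · rw [map_sum, coe_orbitSum]
    exact Finset.sum_congr rfl fun g _ => (hcomp g p).symm

theorem algebraMap_mul_mem_of_forall_X_mul_mem {F : Subfield L}
    (hk : ∀ c : k, algebraMap k L c ∈ F) {M : Submodule F L}
    (hX : ∀ i, ∀ m ∈ M, φ (X i) * m ∈ M) (p : P) : ∀ m ∈ M, φ p * m ∈ M := by
  induction p using MvPolynomial.induction_on with
  | C c =>
    intro m hm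
    rw [← MvPolynomial.algebraMap_eq, ← IsScalarTower.algebraMap_apply k P L]
    exact M.smul_mem ⟨_, hk c⟩ hm
  | add p q hp hq =>
    intro m hm
    rw [map_add, add_mul]
    exact M.add_mem (hp m hm) (hq m hm)
  | mul_X p i hp =>
    intro m hm
    rw [map_mul, mul_assoc]
    exact hp _ (hX i m hm)

theorem fixedPoints_le_closureInvariantsDegLE [Group G] [Fintype G] [MulSemiringAction G P]
    [SMulCommClass G k P] [MulSemiringAction G L]
    (hlin : ∀ (g : G) i, (g • (X i : P)).IsHomogeneous 1)
    (hcomp : ∀ (g : G) (p : P), g • φ p = φ (g • p)) (hchar : (Fintype.card G : k) ≠ 0) {d : ℕ}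
    (hspan : Submodule.span (FixedPoints.subfield G L) (φ '' {p : P | p.totalDegree ≤ d}) = ⊤) :
    FixedPoints.subfield G L ≤ closureInvariantsDegLE k σ G (2 * d + 1) := by
  set K' := closureInvariantsDegLE k σ G (2 * d + 1)
  have hG : (Fintype.card G : L) ≠ 0 := by
    rw [← map_natCast (algebraMap k L)]
    exact (map_ne_zero _).mpr hchar
  let b := Module.Basis.ofSpan hspan.ge
  have hb : ∀ i, ∃ q : P, q.totalDegree ≤ d ∧ φ q = b i :=
    fun i => Module.Basis.ofSpan_subset hspan.ge ⟨i, rfl⟩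
  have horbit : ∀ i (q : P), q.totalDegree ≤ d + 1 → (orbitSum G L (b i * φ q) : L) ∈ K' := by
    intro i q hq
    obtain ⟨qi, hqi, hqi_eq⟩ := hb i
    rw [← hqi_eq, ← map_mul]
    exact coe_orbitSum_algebraMap_mem_closureInvariantsDegLE hlin hcomp
      ((totalDegree_mul _ _).trans (by omega))
  set M := Submodule.span K' (Set.range b)
  have hlow_mem : ∀ q : P, q.totalDegree ≤ d + 1 → φ q ∈ M := by
    refine fun q hq => mem_span_of_forall_orbitSum_mul_mem hG b K' (fun i j => ?_)
      (fun i => horbit i q hq)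
    obtain ⟨qj, hqj, hqj_eq⟩ := hb j
    exact hqj_eq ▸ horbit i qj (by omega)
  have hXM : ∀ i, ∀ m ∈ M, φ (X i) * m ∈ M := by
    refine fun i _ => Submodule.mul_mem_span_of_forall_mul_mem ?_
    rintro _ ⟨j, rfl⟩
    obtain ⟨qj, hqj, hqj_eq⟩ := hb j
    rw [← hqj_eq, ← map_mul]
    exact hlow_mem _ ((totalDegree_mul _ _).trans (by rw [totalDegree_X]; omega))
  have := Module.Finite.finite_basis b
  have hM_top : M = ⊤ := by
    refine Submodule.eq_top_of_forall_algebraMap_mul_mem (R := P)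
      (Submodule.fg_span (Set.finite_range b)) ?_
      (algebraMap_mul_mem_of_forall_X_mul_mem (fun c => Subfield.subset_closure
        (Or.inl ⟨c, rfl⟩)) hXM)
    exact fun h => one_ne_zero ((Submodule.mem_bot _).mp (h ▸ map_one φ ▸ hlow_mem 1 (by simp)))
  refine fun f hf => mem_of_orbitSum_mem hG K' hf (orbitSum_mem_of_mem_span
    (closureInvariantsDegLE_le_fixedPoints hcomp _) ?_ (hM_top ▸ Submodule.mem_top))
  rintro _ ⟨i, rfl⟩
  simpa using horbit i 1 (by simp)

theorem closureInvariantsDegLE_eq_fixedPoints [Group G] [Fintype G] [MulSemiringAction G P]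
    [SMulCommClass G k P] [MulSemiringAction G L]
    (hlin : ∀ (g : G) i, (g • (X i : P)).IsHomogeneous 1)
    (hcomp : ∀ (g : G) (p : P), g • φ p = φ (g • p)) (hchar : (Fintype.card G : k) ≠ 0) {d : ℕ}
    (hspan : Submodule.span (FixedPoints.subfield G L) (φ '' {p : P | p.totalDegree ≤ d}) = ⊤) :
    closureInvariantsDegLE k σ G (2 * d + 1) = FixedPoints.subfield G L :=
  le_antisymm (closureInvariantsDegLE_le_fixedPoints hcomp _)
    (fixedPoints_le_closureInvariantsDegLE hlin hcomp hchar hspan)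

end Invariants

theorem Nat.sInf_le_of_forall_imp {p q : ℕ → Prop} {f : ℕ → ℕ} (h : ∀ d, q d → p (f d))
    (hq : ∃ d, q d) : sInf {e | p e} ≤ f (sInf {e | q e}) :=
  Nat.sInf_le (h _ (Nat.sInf_mem hq))

theorem field_noether_le_two_mul_span_add_one_general
    (k : Type*) [Field k] (n : ℕ) (G : Type*) [Group G] [Fintype G]
    [MulSemiringAction G (MvPolynomial (Fin n) k)]
    [SMulCommClass G k (MvPolynomial (Fin n) k)]
    (hlin : ∀ (g : G) (i : Fin n), ((g • (X i : MvPolynomial (Fin n) k)).IsHomogeneous 1))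
    [MulSemiringAction G (FractionRing (MvPolynomial (Fin n) k))]
    (hcomp : ∀ (g : G) (p : MvPolynomial (Fin n) k),
      g • (algebraMap (MvPolynomial (Fin n) k) (FractionRing (MvPolynomial (Fin n) k)) p)
        = algebraMap (MvPolynomial (Fin n) k) (FractionRing (MvPolynomial (Fin n) k)) (g • p))
    (hchar : (Fintype.card G : k) ≠ 0)
    (d : ℕ)
    (hspan : Submodule.span
        (FixedPoints.subfield G (FractionRing (MvPolynomial (Fin n) k)))
        ((algebraMap (MvPolynomial (Fin n) k) (FractionRing (MvPolynomial (Fin n) k))) ''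
          {p : MvPolynomial (Fin n) k | p.totalDegree ≤ d}) = ⊤) :
    Subfield.closure
        (Set.range (algebraMap k (FractionRing (MvPolynomial (Fin n) k)))
          ∪ (algebraMap (MvPolynomial (Fin n) k) (FractionRing (MvPolynomial (Fin n) k)) ''
            {p : MvPolynomial (Fin n) k |
              p.totalDegree ≤ 2 * d + 1 ∧ ∀ g : G, g • p = p}))
      = FixedPoints.subfield G (FractionRing (MvPolynomial (Fin n) k)) ∧
    sInf {e : ℕ | Subfield.closure
        (Set.range (algebraMap k (FractionRing (MvPolynomial (Fin n) k)))
          ∪ (algebraMap (MvPolynomial (Fin n) k) (FractionRing (MvPolynomial (Fin n) k)) ''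
            {p : MvPolynomial (Fin n) k |
              p.totalDegree ≤ e ∧ ∀ g : G, g • p = p}))
      = FixedPoints.subfield G (FractionRing (MvPolynomial (Fin n) k))}
      ≤ 2 * sInf {e : ℕ | Submodule.span
        (FixedPoints.subfield G (FractionRing (MvPolynomial (Fin n) k)))
        ((algebraMap (MvPolynomial (Fin n) k) (FractionRing (MvPolynomial (Fin n) k))) ''
          {p : MvPolynomial (Fin n) k | p.totalDegree ≤ e}) = ⊤} + 1 :=
  ⟨closureInvariantsDegLE_eq_fixedPoints hlin hcomp hchar hspan,
    Nat.sInf_le_of_forall_imp (f := fun e => 2 * e + 1)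
      (fun _ => closureInvariantsDegLE_eq_fixedPoints hlin hcomp hchar) ⟨d, hspan⟩⟩

/-- **Theorem (main).** Let `G` be a finite group and `V` a finite-dimensional faithful
representation of `G` over a field `k` (encoded via a linear, degree-preserving action of `G`
on the polynomial ring `k[V] = k[X_1,…,X_n]`, extended to the rational function field
`k(V) = Frac(k[V])`) whose characteristic does not divide `|G|`.  If `d` is such that the
polynomials of degree `≤ d` span `k(V)` over `K = k(V)^G`, then `K` is generated as a field
extension of `k` by the invariant polynomials of degree at most `2d+1`.  In particular,
`β_field(G,V) ≤ 2·D_span(G,V) + 1`. -/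
theorem field_noether_le_two_mul_span_add_one
    (k : Type*) [Field k] (n : ℕ) (G : Type*) [Group G] [Fintype G]
    [MulSemiringAction G (MvPolynomial (Fin n) k)]
    [SMulCommClass G k (MvPolynomial (Fin n) k)]
    (hlin : ∀ (g : G) (i : Fin n), ((g • (X i : MvPolynomial (Fin n) k)).IsHomogeneous 1))
    (hfaithful : ∀ g : G, (∀ p : MvPolynomial (Fin n) k, g • p = p) → g = 1)
    [MulSemiringAction G (FractionRing (MvPolynomial (Fin n) k))]
    (hcomp : ∀ (g : G) (p : MvPolynomial (Fin n) k),
      g • (algebraMap (MvPolynomial (Fin n) k) (FractionRing (MvPolynomial (Fin n) k)) p)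
        = algebraMap (MvPolynomial (Fin n) k) (FractionRing (MvPolynomial (Fin n) k)) (g • p))
    (hchar : (Fintype.card G : k) ≠ 0)
    (d : ℕ)
    (hspan : Submodule.span
        (FixedPoints.subfield G (FractionRing (MvPolynomial (Fin n) k)))
        ((algebraMap (MvPolynomial (Fin n) k) (FractionRing (MvPolynomial (Fin n) k))) ''
          {p : MvPolynomial (Fin n) k | p.totalDegree ≤ d}) = ⊤) :
    Subfield.closure
        (Set.range (algebraMap k (FractionRing (MvPolynomial (Fin n) k)))
          ∪ (algebraMap (MvPolynomial (Fin n) k) (FractionRing (MvPolynomial (Fin n) k)) ''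
            {p : MvPolynomial (Fin n) k |
              p.totalDegree ≤ 2 * d + 1 ∧ ∀ g : G, g • p = p}))
      = FixedPoints.subfield G (FractionRing (MvPolynomial (Fin n) k)) ∧
    sInf {e : ℕ | Subfield.closure
        (Set.range (algebraMap k (FractionRing (MvPolynomial (Fin n) k)))
          ∪ (algebraMap (MvPolynomial (Fin n) k) (FractionRing (MvPolynomial (Fin n) k)) ''
            {p : MvPolynomial (Fin n) k |
              p.totalDegree ≤ e ∧ ∀ g : G, g • p = p}))
      = FixedPoints.subfield G (FractionRing (MvPolynomial (Fin n) k))}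
      ≤ 2 * sInf {e : ℕ | Submodule.span
        (FixedPoints.subfield G (FractionRing (MvPolynomial (Fin n) k)))
        ((algebraMap (MvPolynomial (Fin n) k) (FractionRing (MvPolynomial (Fin n) k))) ''
          {p : MvPolynomial (Fin n) k | p.totalDegree ≤ e}) = ⊤} + 1 :=
  field_noether_le_two_mul_span_add_one_general k n G hlin hcomp hchar d hspan
end

section
/- Let F/k be a field extension and let V_F = F ⊗_k V be the base change of V, with G acting through its action on V. For every natural number d, k[V]_{≤d} spans k(V) as a k(V)^G-vector space if and only if F[V_F]_{≤d} spans F(V_F) as an F(V_F)^G-vector space. Consequently, D_span(G, V_F) = D_span(G, V). -/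
/-!
For a field `L` with a faithful action of a finite group `G`, a set `S ⊆ L` spans `L` over `L^G`
exactly when its orbit vectors `(g • s)_g` span `G → L` over `L`. One direction is Dedekind's
independence of characters; for the other, an element `θ` with nonzero trace `∑ g • θ` turns an
`L`-linear relation among orbit vectors into an `L^G`-linear one. Spanning a coordinate space is
detected by the absence of a nonzero orthogonal vector, so it is unaffected by extending the
scalars along `k(V) → F(V_F)`, and the orbit vectors of `F`-polynomials of degree `≤ d` are
`F`-combinations of those of the `k`-monomials of degree `≤ d`.
-/

open MvPolynomial

namespace Submodule

variable {K ι : Type*} [Field K] [Fintype ι]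

theorem span_eq_top_iff_forall_dotProduct_eq_zero (T : Set (ι → K)) :
    span K T = ⊤ ↔ ∀ c : ι → K, (∀ w ∈ T, c ⬝ᵥ w = 0) → c = 0 := by
  classical
  rw [← dualAnnihilator_eq_bot_iff, Submodule.eq_bot_iff]
  refine (dotProductEquiv K ι).toEquiv.forall_congr_right.symm.trans (forall_congr' fun c => ?_)
  rw [← SetLike.mem_coe, coe_dualAnnihilator_span]
  simp [Set.subset_def]

theorem span_comp_eq_top_iff {K' : Type*} [Field K'] (f : K →+* K') (T : Set (ι → K)) :
    span K' ((f ∘ ·) '' T) = ⊤ ↔ span K T = ⊤ := by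
  classical
  constructor
  · simp only [span_eq_top_iff_forall_dotProduct_eq_zero, Set.forall_mem_image]
    intro h c hc
    have hfc : f ∘ c = 0 := h _ fun w hw => by
      simpa [dotProduct, map_sum] using congrArg f (hc w hw)
    exact funext fun i => f.injective (by simpa using congrFun hfc i)
  · intro h
    have hcomp : ∀ w ∈ span K T, f ∘ w ∈ span K' ((f ∘ ·) '' T) := fun w hw => by
      induction hw using span_induction with
      | mem w hw => exact subset_span ⟨w, hw, rfl⟩
      | zero => simp
      | add x y _ _ hx hy => simpa using add_mem hx hy
      | smul a x _ hx =>
        rw [show f ∘ (a • x) = f a • (f ∘ x) from funext fun i => map_mul f a (x i)]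
        exact smul_mem _ (f a) hx
    rw [eq_top_iff, ← (Pi.basisFun K' ι).span_eq, span_le]
    rintro _ ⟨i, rfl⟩
    have hi := hcomp (Pi.single i 1) (h ▸ mem_top)
    rwa [show f ∘ Pi.single i 1 = Pi.single i 1 from
      funext fun j => by simp [Pi.single_apply, apply_ite f]] at hi

theorem span_image_eq_of_span_eq {R S M N : Type*} [CommSemiring R] [Semiring S] [Algebra R S]
    [AddCommMonoid M] [Module R M] [AddCommMonoid N] [Module R N] [Module S N]
    [IsScalarTower R S N] (f : M →ₗ[R] N) {s t : Set M} (h : span R s = span R t) :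
    span S (f '' s) = span S (f '' t) := by
  rw [← span_span_of_tower R S, ← map_span, h, map_span, span_span_of_tower]

end Submodule

open Submodule

section OrbitVector

variable (G : Type*) {M : Type*}

def orbitVector [SMul G M] (x : M) : G → M := fun g => g • x

@[simp]
theorem orbitVector_apply [SMul G M] (x : M) (g : G) : orbitVector G x g = g • x := rfl

end OrbitVector

section OrbitLinearMap

variable (R G M : Type*) [Semiring R] [Monoid G] [AddCommMonoid M] [Module R M]
  [DistribMulAction G M] [SMulCommClass G R M]

def orbitLinearMap : M →ₗ[R] (G → M) where
  toFun := orbitVector G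
  map_add' x y := funext fun g => smul_add g x y
  map_smul' r x := funext fun g => smul_comm g r x

@[simp]
theorem coe_orbitLinearMap : ⇑(orbitLinearMap R G M) = orbitVector G := rfl

end OrbitLinearMap

section FixedPoints

variable {G L : Type*} [Group G] [Fintype G] [Field L] [MulSemiringAction G L]

local notation "L^G" => FixedPoints.subfield G L

theorem sum_smul_mem_fixedPoints (x : L) : ∑ g : G, g • x ∈ L^G := by
  intro h
  rw [Finset.smul_sum]
  exact Fintype.sum_equiv (Equiv.mulLeft h) _ _ fun g => (mul_smul h g x).symm

variable [FaithfulSMul G L]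

theorem eq_zero_of_forall_sum_mul_smul_eq_zero (c : G → L)
    (h : ∀ x : L, ∑ g, c g * g • x = 0) : c = 0 := by
  have hinj : Function.Injective fun g : G => (MulSemiringAction.toRingHom G L g : L →* L) :=
    fun _ _ h => eq_of_smul_eq_smul (DFunLike.congr_fun h)
  refine funext <| Fintype.linearIndependent_iff.mp
    ((linearIndependent_monoidHom L L).comp _ hinj) c ?_
  ext x
  simpa using h x

theorem exists_sum_smul_ne_zero : ∃ x : L, ∑ g : G, g • x ≠ 0 := by
  by_contra! h
  exact one_ne_zero <|
    congrFun (eq_zero_of_forall_sum_mul_smul_eq_zero (1 : G → L) (by simpa using h)) 1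

theorem span_range_orbitVector_eq_top : span L (Set.range (orbitVector (M := L) G)) = ⊤ := by
  rw [span_eq_top_iff_forall_dotProduct_eq_zero]
  rintro c hc
  exact eq_zero_of_forall_sum_mul_smul_eq_zero c fun x => hc _ ⟨x, rfl⟩

theorem span_orbitVector_eq_top_of_span_eq_top {S : Set L} (h : span L^G S = ⊤) :
    span L (orbitVector G '' S) = ⊤ := by
  rw [eq_top_iff, ← span_range_orbitVector_eq_top, span_le]
  rintro _ ⟨x, rfl⟩
  have hx := mem_map_of_mem (f := orbitLinearMap L^G G L) (h ▸ mem_top : x ∈ span L^G S)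
  rw [map_span, coe_orbitLinearMap] at hx
  exact span_le_restrictScalars L^G L _ hx

theorem span_eq_top_of_span_orbitVector_eq_top {S : Set L}
    (h : span L (orbitVector G '' S) = ⊤) : span L^G S = ⊤ := by
  have htrace : ∀ θ x : L,
      ∑ g : G, g • (θ * orbitVector G x g⁻¹) = (∑ g : G, g • θ) * x := by
    intro θ x
    simp [smul_mul', Finset.sum_mul]
  -- Scalars from `L` are absorbed into `θ`, so these sums stay in the `L^G`-span of `S`.
  have hdescend : ∀ w ∈ span L (orbitVector G '' S), ∀ θ : L,
      ∑ g : G, g • (θ * w g⁻¹) ∈ span L^G S := by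
    intro w hw
    induction hw using span_induction with
    | mem w hw =>
      obtain ⟨s, hs, rfl⟩ := hw
      intro θ
      rw [htrace]
      exact smul_mem _ (⟨_, sum_smul_mem_fixedPoints θ⟩ : L^G) (subset_span hs)
    | zero => simp
    | add x y _ _ hx hy =>
      intro θ
      simpa [mul_add, Finset.sum_add_distrib] using add_mem (hx θ) (hy θ)
    | smul a w _ hw =>
      intro θ
      simpa [mul_assoc] using hw (θ * a)
  obtain ⟨θ, hθ⟩ := exists_sum_smul_ne_zero (G := G) (L := L)
  rw [eq_top_iff']
  intro x
  have hx := smul_mem _ (⟨_, sum_smul_mem_fixedPoints θ⟩ : L^G)⁻¹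
    (htrace θ x ▸ hdescend _ (h ▸ mem_top) θ)
  simpa [Subfield.smul_def, inv_mul_cancel_left₀ hθ] using hx

theorem span_fixedPoints_eq_top_iff (S : Set L) :
    span L^G S = ⊤ ↔ span L (orbitVector G '' S) = ⊤ :=
  ⟨span_orbitVector_eq_top_of_span_eq_top, span_eq_top_of_span_orbitVector_eq_top⟩

end FixedPoints

namespace MvPolynomial

variable {R S σ : Type*} [CommSemiring R] [CommSemiring S]

theorem totalDegree_map_le (f : R →+* S) (p : MvPolynomial σ R) :
    (map f p).totalDegree ≤ p.totalDegree :=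
  Finset.sup_mono (support_map_subset f p)

theorem span_map_setOf_totalDegree_le [Algebra R S] (d : ℕ) :
    span S (map (algebraMap R S) '' {p : MvPolynomial σ R | p.totalDegree ≤ d}) =
      span S {p : MvPolynomial σ S | p.totalDegree ≤ d} := by
  refine le_antisymm (span_mono ?_) (span_le.2 fun q hq => ?_)
  · rintro _ ⟨p, hp, rfl⟩
    exact (totalDegree_map_le _ p).trans hp
  · rw [SetLike.mem_coe, q.as_sum]
    refine sum_mem fun α hα => ?_
    rw [← mul_one (coeff α q), ← smul_eq_mul, ← smul_monomial, ← map_one (algebraMap R S),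
      ← map_monomial]
    refine smul_mem _ _ (subset_span ⟨_, ?_, rfl⟩)
    exact (totalDegree_monomial_le α 1).trans ((le_totalDegree hα).trans hq)

end MvPolynomial

section BaseChange

variable {k F σ G : Type*} [Field k] [Field F] [Algebra k F] [Monoid G] [Fintype G]
  [MulSemiringAction G (MvPolynomial σ k)] [MulSemiringAction G (MvPolynomial σ F)]
  [MulSemiringAction G (FractionRing (MvPolynomial σ k))]
  [MulSemiringAction G (FractionRing (MvPolynomial σ F))]

local notation "k[σ]" => MvPolynomial σ k
local notation "F[σ]" => MvPolynomial σ F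
local notation "k(σ)" => FractionRing (MvPolynomial σ k)
local notation "F(σ)" => FractionRing (MvPolynomial σ F)

theorem span_orbitVector_baseChange_eq_top_iff [SMulCommClass G F F[σ]]
    (hbase : ∀ (g : G) (p : k[σ]), g • map (algebraMap k F) p = map (algebraMap k F) (g • p))
    (hcompk : ∀ (g : G) (p : k[σ]), g • algebraMap k[σ] k(σ) p = algebraMap k[σ] k(σ) (g • p))
    (hcompF : ∀ (g : G) (p : F[σ]), g • algebraMap F[σ] F(σ) p = algebraMap F[σ] F(σ) (g • p))
    (d : ℕ) :
    span k(σ) (orbitVector G '' (algebraMap k[σ] k(σ) '' {p | p.totalDegree ≤ d})) = ⊤ ↔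
      span F(σ) (orbitVector G '' (algebraMap F[σ] F(σ) '' {p | p.totalDegree ≤ d})) = ⊤ := by
  let φ : k[σ] →+* F[σ] := map (algebraMap k F)
  have hψ : Function.Injective ((algebraMap F[σ] F(σ)).comp φ) :=
    (IsFractionRing.injective F[σ] F(σ)).comp (map_injective _ (algebraMap k F).injective)
  let ι : k(σ) →+* F(σ) := IsFractionRing.lift hψ
  let f : F[σ] →ₗ[F] G → F(σ) :=
    (IsScalarTower.toAlgHom F F[σ] F(σ)).toLinearMap.compLeft G ∘ₗ orbitLinearMap F G F[σ]
  have hk (p : k[σ]) : ι ∘ orbitVector G (algebraMap k[σ] k(σ) p) = f (φ p) := by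
    funext g
    change ι (g • algebraMap k[σ] k(σ) p) = algebraMap F[σ] F(σ) (g • φ p)
    rw [hcompk, hbase]
    exact IsFractionRing.lift_algebraMap hψ (g • p)
  have hF (q : F[σ]) : orbitVector G (algebraMap F[σ] F(σ) q) = f q := funext fun g => hcompF g q
  rw [← span_comp_eq_top_iff ι]
  simp only [Set.image_image, hk, hF]
  rw [← Set.image_image f φ, span_image_eq_of_span_eq f (span_map_setOf_totalDegree_le d)]

end BaseChange

theorem spanning_degree_base_change_general
    (k : Type*) [Field k] (F : Type*) [Field F] [Algebra k F]
    (n : ℕ) (G : Type*) [Group G] [Fintype G]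
    [MulSemiringAction G (MvPolynomial (Fin n) k)]
    (hfaithful : ∀ g : G, (∀ p : MvPolynomial (Fin n) k, g • p = p) → g = 1)
    [MulSemiringAction G (MvPolynomial (Fin n) F)]
    [SMulCommClass G F (MvPolynomial (Fin n) F)]
    -- the action on `F[V_F]` is obtained from the action on `k[V]` by extension of scalars:
    (hbase : ∀ (g : G) (p : MvPolynomial (Fin n) k),
      g • (MvPolynomial.map (algebraMap k F) p) = MvPolynomial.map (algebraMap k F) (g • p))
    [MulSemiringAction G (FractionRing (MvPolynomial (Fin n) k))]
    (hcompk : ∀ (g : G) (p : MvPolynomial (Fin n) k),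
      g • (algebraMap (MvPolynomial (Fin n) k) (FractionRing (MvPolynomial (Fin n) k)) p)
        = algebraMap (MvPolynomial (Fin n) k) (FractionRing (MvPolynomial (Fin n) k)) (g • p))
    [MulSemiringAction G (FractionRing (MvPolynomial (Fin n) F))]
    (hcompF : ∀ (g : G) (p : MvPolynomial (Fin n) F),
      g • (algebraMap (MvPolynomial (Fin n) F) (FractionRing (MvPolynomial (Fin n) F)) p)
        = algebraMap (MvPolynomial (Fin n) F) (FractionRing (MvPolynomial (Fin n) F)) (g • p)) :
    (∀ d : ℕ,
      Submodule.span (FixedPoints.subfield G (FractionRing (MvPolynomial (Fin n) k)))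
        ((algebraMap (MvPolynomial (Fin n) k) (FractionRing (MvPolynomial (Fin n) k))) ''
          {p : MvPolynomial (Fin n) k | p.totalDegree ≤ d}) = ⊤
      ↔
      Submodule.span (FixedPoints.subfield G (FractionRing (MvPolynomial (Fin n) F)))
        ((algebraMap (MvPolynomial (Fin n) F) (FractionRing (MvPolynomial (Fin n) F))) ''
          {p : MvPolynomial (Fin n) F | p.totalDegree ≤ d}) = ⊤) ∧
    sInf {d : ℕ |
      Submodule.span (FixedPoints.subfield G (FractionRing (MvPolynomial (Fin n) F)))
        ((algebraMap (MvPolynomial (Fin n) F) (FractionRing (MvPolynomial (Fin n) F))) ''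
          {p : MvPolynomial (Fin n) F | p.totalDegree ≤ d}) = ⊤}
    = sInf {d : ℕ |
      Submodule.span (FixedPoints.subfield G (FractionRing (MvPolynomial (Fin n) k)))
        ((algebraMap (MvPolynomial (Fin n) k) (FractionRing (MvPolynomial (Fin n) k))) ''
          {p : MvPolynomial (Fin n) k | p.totalDegree ≤ d}) = ⊤} := by
  let φ := map (R := k) (σ := Fin n) (algebraMap k F)
  have : FaithfulSMul G (MvPolynomial (Fin n) k) := ⟨fun h =>
    (inv_mul_eq_one.mp (hfaithful _ fun p => by rw [mul_smul, h, inv_smul_smul])).symm⟩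
  have : FaithfulSMul G (MvPolynomial (Fin n) F) := FaithfulSMul.of_injective
    (⟨φ, fun g p => (hbase g p).symm⟩ : MvPolynomial (Fin n) k →[G] MvPolynomial (Fin n) F)
    (map_injective _ (algebraMap k F).injective)
  have : FaithfulSMul G (FractionRing (MvPolynomial (Fin n) k)) := FaithfulSMul.of_injective
    (⟨_, fun g p => (hcompk g p).symm⟩ : MvPolynomial (Fin n) k →[G] _) (IsFractionRing.injective _ _)
  have : FaithfulSMul G (FractionRing (MvPolynomial (Fin n) F)) := FaithfulSMul.of_injective
    (⟨_, fun g p => (hcompF g p).symm⟩ : MvPolynomial (Fin n) F →[G] _) (IsFractionRing.injective _ _)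
  have hiff (d : ℕ) := (span_fixedPoints_eq_top_iff _).trans <|
    (span_orbitVector_baseChange_eq_top_iff hbase hcompk hcompF d).trans
      (span_fixedPoints_eq_top_iff _).symm
  exact ⟨hiff, congrArg sInf (Set.ext fun d => (hiff d).symm)⟩

/-- **Lemma (base change invariance of the spanning degree).** Let `F/k` be a field extension
and `V_F = F ⊗_k V` the base change of the representation `V` (encoded: `G` acts linearly on
`k[V] = k[X_1,…,X_n]` and on `F[V_F] = F[X_1,…,X_n]`, compatibly with the coefficient
extension map).  Then for every `d`, the polynomials of degree `≤ d` span `k(V)` over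
`k(V)^G` iff the polynomials of degree `≤ d` span `F(V_F)` over `F(V_F)^G`; consequently
`D_span(G, V_F) = D_span(G, V)`. -/
theorem spanning_degree_base_change
    (k : Type*) [Field k] (F : Type*) [Field F] [Algebra k F]
    (n : ℕ) (G : Type*) [Group G] [Fintype G]
    [MulSemiringAction G (MvPolynomial (Fin n) k)]
    [SMulCommClass G k (MvPolynomial (Fin n) k)]
    (hlin : ∀ (g : G) (i : Fin n), ((g • (X i : MvPolynomial (Fin n) k)).IsHomogeneous 1))
    (hfaithful : ∀ g : G, (∀ p : MvPolynomial (Fin n) k, g • p = p) → g = 1)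
    [MulSemiringAction G (MvPolynomial (Fin n) F)]
    [SMulCommClass G F (MvPolynomial (Fin n) F)]
    -- the action on `F[V_F]` is obtained from the action on `k[V]` by extension of scalars:
    (hbase : ∀ (g : G) (p : MvPolynomial (Fin n) k),
      g • (MvPolynomial.map (algebraMap k F) p) = MvPolynomial.map (algebraMap k F) (g • p))
    [MulSemiringAction G (FractionRing (MvPolynomial (Fin n) k))]
    (hcompk : ∀ (g : G) (p : MvPolynomial (Fin n) k),
      g • (algebraMap (MvPolynomial (Fin n) k) (FractionRing (MvPolynomial (Fin n) k)) p)
        = algebraMap (MvPolynomial (Fin n) k) (FractionRing (MvPolynomial (Fin n) k)) (g • p))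
    [MulSemiringAction G (FractionRing (MvPolynomial (Fin n) F))]
    (hcompF : ∀ (g : G) (p : MvPolynomial (Fin n) F),
      g • (algebraMap (MvPolynomial (Fin n) F) (FractionRing (MvPolynomial (Fin n) F)) p)
        = algebraMap (MvPolynomial (Fin n) F) (FractionRing (MvPolynomial (Fin n) F)) (g • p)) :
    (∀ d : ℕ,
      Submodule.span (FixedPoints.subfield G (FractionRing (MvPolynomial (Fin n) k)))
        ((algebraMap (MvPolynomial (Fin n) k) (FractionRing (MvPolynomial (Fin n) k))) ''
          {p : MvPolynomial (Fin n) k | p.totalDegree ≤ d}) = ⊤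
      ↔
      Submodule.span (FixedPoints.subfield G (FractionRing (MvPolynomial (Fin n) F)))
        ((algebraMap (MvPolynomial (Fin n) F) (FractionRing (MvPolynomial (Fin n) F))) ''
          {p : MvPolynomial (Fin n) F | p.totalDegree ≤ d}) = ⊤) ∧
    sInf {d : ℕ |
      Submodule.span (FixedPoints.subfield G (FractionRing (MvPolynomial (Fin n) F)))
        ((algebraMap (MvPolynomial (Fin n) F) (FractionRing (MvPolynomial (Fin n) F))) ''
          {p : MvPolynomial (Fin n) F | p.totalDegree ≤ d}) = ⊤}
    = sInf {d : ℕ |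
      Submodule.span (FixedPoints.subfield G (FractionRing (MvPolynomial (Fin n) k)))
        ((algebraMap (MvPolynomial (Fin n) k) (FractionRing (MvPolynomial (Fin n) k))) ''
          {p : MvPolynomial (Fin n) k | p.totalDegree ≤ d}) = ⊤} :=
  spanning_degree_base_change_general k F n G hfaithful hbase hcompk hcompF
end

section
/- Let f_1,…,f_m be elements of the generic orbit ideal I ⊆ K[X_1,…,X_n]. If f_1,…,f_m generate I as an ideal, then the set of all coefficients of all the polynomials f_j generates K = k(V)^G as a field extension of k. -/
open MvPolynomial

set_option synthInstance.maxHeartbeats 1000000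
set_option maxHeartbeats 1000000

/-- Auxiliary lemma: a purely field-theoretic version of the main argument.
If `Ξ` is a `K`-algebra map to `F`, the `f j` generate `ker Ξ` and have coefficients
in a subfield `L ≤ K`, and `α ∈ K` satisfies `Ξ (C α * Q - P) = 0` for polynomials
`P, Q` with coefficients in `L` and `Ξ Q ≠ 0`, then `α ∈ L`. -/
theorem aux_mem_closure
    {F : Type*} [Field F] {n m : ℕ} {K L : Subfield F} (hLK : L ≤ K)
    (Ξ : MvPolynomial (Fin n) ↥K →ₐ[↥K] F)
    (f : Fin m → MvPolynomial (Fin n) ↥K)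
    (hf : ∀ j mo, (((f j).coeff mo : ↥K) : F) ∈ L)
    (hgen : Ideal.span (Set.range f) = RingHom.ker Ξ)
    (α : ↥K) (P Q : MvPolynomial (Fin n) ↥K)
    (hP : ∀ mo, ((P.coeff mo : ↥K) : F) ∈ L) (hQ : ∀ mo, ((Q.coeff mo : ↥K) : F) ∈ L)
    (hQ0 : Ξ Q ≠ 0) (hPQ : Ξ (C α * Q - P) = 0) : (α : F) ∈ L := by
  classical
  -- `L` as a subfield of `K`
  let L' : Subfield ↥K := L.comap K.subtype
  -- the copy of `L'` inside `K` as an `L'`-submodule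
  let V1 : Submodule ↥L' ↥K := LinearMap.range (Algebra.linearMap ↥L' ↥K)
  obtain ⟨W, hW⟩ := Submodule.exists_isCompl V1
  -- `π` : an `L'`-linear retraction of `K` onto `L'`
  let π : ↥K →ₗ[↥L'] ↥K := V1.subtype ∘ₗ V1.linearProjOfIsCompl W hW
  have hπ_in : ∀ x : ↥K, ((π x : ↥K) : F) ∈ L := by
    intro x
    have hmem : π x ∈ V1 := (V1.linearProjOfIsCompl W hW x).2
    obtain ⟨y, hy⟩ := hmem
    rw [← hy]
    exact y.2
  have hπ_id : ∀ x : ↥K, (x : F) ∈ L → π x = x := by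
    intro x hx
    have hx1 : x ∈ V1 := ⟨⟨x, hx⟩, rfl⟩
    have h2 : V1.linearProjOfIsCompl W hW x = ⟨x, hx1⟩ :=
      Submodule.linearProjOfIsCompl_apply_left hW ⟨x, hx1⟩
    show ((V1.linearProjOfIsCompl W hW x : V1) : ↥K) = x
    rw [h2]
  have hπ_mul : ∀ (c x : ↥K), (c : F) ∈ L → π (c * x) = c * π x := by
    intro c x hc
    exact π.map_smul (⟨c, hc⟩ : ↥L') x
  -- the coefficientwise application of `π` to polynomials
  let T : MvPolynomial (Fin n) ↥K → MvPolynomial (Fin n) ↥K :=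
    fun p => ∑ mo ∈ p.support, monomial mo (π (p.coeff mo))
  have coeffT : ∀ (p : MvPolynomial (Fin n) ↥K) (mo : (Fin n) →₀ ℕ),
      (T p).coeff mo = π (p.coeff mo) := by
    intro p mo
    show coeff mo (∑ mo' ∈ p.support, monomial mo' (π (p.coeff mo'))) = _
    rw [coeff_sum]
    simp only [coeff_monomial]
    rw [Finset.sum_ite_eq' p.support mo (fun mo' => π (p.coeff mo'))]
    split_ifs with h
    · rfl
    · rw [notMem_support_iff.mp h, map_zero]
  have hTmulL : ∀ (q g : MvPolynomial (Fin n) ↥K), (∀ mo, ((g.coeff mo : ↥K) : F) ∈ L) →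
      T (q * g) = T q * g := by
    intro q g hg
    apply MvPolynomial.ext
    intro mo
    rw [coeffT, coeff_mul, coeff_mul, map_sum]
    apply Finset.sum_congr rfl
    intro x _
    rw [coeffT, mul_comm (coeff x.1 q) (coeff x.2 g), hπ_mul _ _ (hg x.2),
      mul_comm]
  have hTCα : T (C α) = C (π α) := by
    apply MvPolynomial.ext
    intro mo
    rw [coeffT, coeff_C, coeff_C]
    split_ifs with h
    · rfl
    · exact map_zero π
  -- `T` preserves the kernel ideal
  have hTker : ∀ p ∈ RingHom.ker Ξ, T p ∈ RingHom.ker Ξ := by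
    intro p hp
    rw [← hgen] at hp ⊢
    obtain ⟨c, hc⟩ := (Submodule.mem_span_range_iff_exists_fun _).mp hp
    rw [← hc]
    have hsum : T (∑ j, c j • f j) = ∑ j, T (c j) * f j := by
      apply MvPolynomial.ext
      intro mo
      rw [coeffT, coeff_sum, coeff_sum, map_sum]
      apply Finset.sum_congr rfl
      intro j _
      rw [smul_eq_mul, ← coeffT, hTmulL _ _ (hf j)]
    rw [hsum]
    exact Ideal.sum_mem _ fun j _ => Ideal.mul_mem_left _ _ (Ideal.subset_span ⟨j, rfl⟩)
  have hC : ∀ β : ↥K, Ξ (C β) = (β : F) := by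
    intro β
    rw [← MvPolynomial.algebraMap_eq]
    exact Ξ.commutes β
  have hA : C α * Q - P ∈ RingHom.ker Ξ := RingHom.mem_ker.mpr hPQ
  have hA2 := hTker _ hA
  have hTA : T (C α * Q - P) = C (π α) * Q - P := by
    apply MvPolynomial.ext
    intro mo
    rw [coeffT, coeff_sub, coeff_sub, map_sub]
    congr 1
    · rw [← coeffT, hTmulL _ _ hQ, hTCα]
    · exact hπ_id _ (hP mo)
  have h0 : Ξ (C (π α) * Q - P) = 0 := by
    rw [← hTA]
    exact RingHom.mem_ker.mp hA2
  have e1 : (α : F) * Ξ Q - Ξ P = 0 := by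
    rw [← hC α, ← map_mul, ← map_sub]
    exact hPQ
  have e2 : ((π α : ↥K) : F) * Ξ Q - Ξ P = 0 := by
    rw [← hC (π α), ← map_mul, ← map_sub]
    exact h0
  have h3 : ((π α : ↥K) : F) * Ξ Q = (α : F) * Ξ Q := by
    linear_combination e2 - e1
  have h4 : ((π α : ↥K) : F) = (α : F) := mul_right_cancel₀ hQ0 h3
  rw [← h4]
  exact hπ_in α


/-- Second auxiliary lemma: under the hypotheses of the main theorem, the fixed field `K`
is contained in any subfield `L ≤ K` that contains the image of `k` and the coefficients
of the generators of the generic orbit ideal. -/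
theorem aux2_K_le_L {k : Type*} [Field k] {n m : ℕ}
    {K L : Subfield (FractionRing (MvPolynomial (Fin n) k))} (hLK : L ≤ K)
    (hkK : ∀ c : k,
      algebraMap (MvPolynomial (Fin n) k) (FractionRing (MvPolynomial (Fin n) k)) (C c) ∈ K)
    (hkL : ∀ c : k,
      algebraMap (MvPolynomial (Fin n) k) (FractionRing (MvPolynomial (Fin n) k)) (C c) ∈ L)
    (f : Fin m → MvPolynomial (Fin n) ↥K)
    (hf : ∀ (j : Fin m) (mo : (Fin n) →₀ ℕ),
      (((f j).coeff mo : ↥K) : FractionRing (MvPolynomial (Fin n) k)) ∈ L)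
    (hgen : Ideal.span (Set.range f) =
      RingHom.ker (MvPolynomial.aeval (R := ↥K)
        (fun i : Fin n => algebraMap (MvPolynomial (Fin n) k)
          (FractionRing (MvPolynomial (Fin n) k)) (X i)))) :
    K ≤ L := by
  classical
  intro x hx
  let R := MvPolynomial (Fin n) k
  let F := FractionRing R
  let φ : k →+* ↥K := RingHom.codRestrict ((algebraMap R F).comp C) K hkK
  let Ξ : MvPolynomial (Fin n) ↥K →ₐ[↥K] F :=
    MvPolynomial.aeval (R := ↥K) (fun i : Fin n => algebraMap R F (X i))
  have hΞmap : ∀ r : R, Ξ (MvPolynomial.map φ r) = algebraMap R F r := by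
    intro r
    show MvPolynomial.aeval (R := ↥K) (fun i : Fin n => algebraMap R F (X i))
      (MvPolynomial.map φ r) = algebraMap R F r
    rw [aeval_def, eval₂_map]
    have hcomp2 : (algebraMap ↥K F).comp φ = (algebraMap R F).comp C := rfl
    rw [hcomp2]
    have heq : (eval₂Hom ((algebraMap R F).comp C) fun i : Fin n => algebraMap R F (X i))
        = algebraMap R F := by
      apply MvPolynomial.ringHom_ext
      · intro c
        simp
      · intro i
        simp
    calc eval₂ ((algebraMap R F).comp C) (fun i : Fin n => algebraMap R F (X i)) r
        = (eval₂Hom ((algebraMap R F).comp C) fun i : Fin n => algebraMap R F (X i)) r := rfl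
      _ = algebraMap R F r := by rw [heq]
  set α : ↥K := ⟨x, hx⟩ with hα
  obtain ⟨⟨a, s⟩, hs⟩ := IsLocalization.surj (nonZeroDivisors R) x
  let P : MvPolynomial (Fin n) ↥K := MvPolynomial.map φ a
  let Q : MvPolynomial (Fin n) ↥K := MvPolynomial.map φ (s : R)
  have hPL : ∀ mo : (Fin n) →₀ ℕ, ((P.coeff mo : ↥K) : F) ∈ L := by
    intro mo
    show ((coeff mo (MvPolynomial.map φ a) : ↥K) : F) ∈ L
    rw [coeff_map]
    exact hkL _
  have hQL : ∀ mo : (Fin n) →₀ ℕ, ((Q.coeff mo : ↥K) : F) ∈ L := by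
    intro mo
    show ((coeff mo (MvPolynomial.map φ (s : R)) : ↥K) : F) ∈ L
    rw [coeff_map]
    exact hkL _
  have hQ0 : Ξ Q ≠ 0 := by
    show Ξ (MvPolynomial.map φ (s : R)) ≠ 0
    rw [hΞmap]
    exact IsFractionRing.to_map_ne_zero_of_mem_nonZeroDivisors s.2
  have hPQ : Ξ (C α * Q - P) = 0 := by
    rw [map_sub, map_mul]
    show Ξ (C α) * Ξ (MvPolynomial.map φ (s : R)) - Ξ (MvPolynomial.map φ a) = 0
    rw [hΞmap, hΞmap, MvPolynomial.aeval_C]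
    show x * algebraMap R F (s : R) - algebraMap R F a = 0
    rw [hs, sub_self]
  exact aux_mem_closure hLK Ξ f hf hgen α P Q hPL hQL hQ0 hPQ

/-- **Lemma (coefficients of ideal generators generate the invariant field).** Let
`Ξ : K[X_1,…,X_n] → k(V)` be the multiplication map (`K = k(V)^G`) and `I = ker Ξ` the
generic orbit ideal.  If `f_1,…,f_m ∈ I` generate `I` as an ideal, then the set of all
coefficients of all the `f_j` generates `K` as a field extension of `k`. -/
theorem coefficients_of_generators_generate_invariant_field
    (k : Type*) [Field k] (n : ℕ) (G : Type*) [Group G] [Fintype G]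
    [MulSemiringAction G (MvPolynomial (Fin n) k)]
    [SMulCommClass G k (MvPolynomial (Fin n) k)]
    (hlin : ∀ (g : G) (i : Fin n), ((g • (X i : MvPolynomial (Fin n) k)).IsHomogeneous 1))
    (hfaithful : ∀ g : G, (∀ p : MvPolynomial (Fin n) k, g • p = p) → g = 1)
    [MulSemiringAction G (FractionRing (MvPolynomial (Fin n) k))]
    (hcomp : ∀ (g : G) (p : MvPolynomial (Fin n) k),
      g • (algebraMap (MvPolynomial (Fin n) k) (FractionRing (MvPolynomial (Fin n) k)) p)
        = algebraMap (MvPolynomial (Fin n) k) (FractionRing (MvPolynomial (Fin n) k)) (g • p))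
    (m : ℕ)
    (f : Fin m → MvPolynomial (Fin n)
      (FixedPoints.subfield G (FractionRing (MvPolynomial (Fin n) k))))
    (hgen : Ideal.span (Set.range f) =
      RingHom.ker (MvPolynomial.aeval
        (R := FixedPoints.subfield G (FractionRing (MvPolynomial (Fin n) k)))
        (fun i : Fin n =>
          algebraMap (MvPolynomial (Fin n) k) (FractionRing (MvPolynomial (Fin n) k)) (X i)))) :
    Subfield.closure
        (Set.range (algebraMap k (FractionRing (MvPolynomial (Fin n) k)))
          ∪ {x : FractionRing (MvPolynomial (Fin n) k) |
              ∃ (j : Fin m) (mo : (Fin n) →₀ ℕ), (((f j).coeff mo :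
                FixedPoints.subfield G (FractionRing (MvPolynomial (Fin n) k))) :
                  FractionRing (MvPolynomial (Fin n) k)) = x})
      = FixedPoints.subfield G (FractionRing (MvPolynomial (Fin n) k)) := by
  classical
  have hkK : ∀ c : k,
      algebraMap (MvPolynomial (Fin n) k) (FractionRing (MvPolynomial (Fin n) k)) (C c)
        ∈ FixedPoints.subfield G (FractionRing (MvPolynomial (Fin n) k)) := by
    intro c
    intro g
    rw [hcomp]
    congr 1
    rw [← MvPolynomial.algebraMap_eq, Algebra.algebraMap_eq_smul_one,
      smul_comm g c (1 : MvPolynomial (Fin n) k), smul_one]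
  have halg : ∀ c : k, algebraMap k (FractionRing (MvPolynomial (Fin n) k)) c
      = algebraMap (MvPolynomial (Fin n) k) (FractionRing (MvPolynomial (Fin n) k)) (C c) := by
    intro c
    rw [IsScalarTower.algebraMap_apply k (MvPolynomial (Fin n) k)
      (FractionRing (MvPolynomial (Fin n) k)) c, MvPolynomial.algebraMap_eq]
  have hsub : (Set.range (algebraMap k (FractionRing (MvPolynomial (Fin n) k)))
          ∪ {x : FractionRing (MvPolynomial (Fin n) k) |
              ∃ (j : Fin m) (mo : (Fin n) →₀ ℕ), (((f j).coeff mo :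
                FixedPoints.subfield G (FractionRing (MvPolynomial (Fin n) k))) :
                  FractionRing (MvPolynomial (Fin n) k)) = x})
      ⊆ ↑(FixedPoints.subfield G (FractionRing (MvPolynomial (Fin n) k))) := by
    rintro x (⟨c, rfl⟩ | ⟨j, mo, rfl⟩)
    · rw [halg c]
      exact hkK c
    · exact ((f j).coeff mo).2
  have hLK := Subfield.closure_le.mpr hsub
  refine le_antisymm hLK (aux2_K_le_L hLK hkK ?_ f ?_ hgen)
  · intro c
    rw [← halg c]
    exact Subfield.subset_closure (Or.inl ⟨c, rfl⟩)
  · intro j mo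
    exact Subfield.subset_closure (Or.inr ⟨j, mo, rfl⟩)
end

section
/- If d is a natural number such that k[V]_{≤d} spans k(V) as a K-vector space, then the generic orbit ideal I is generated as an ideal of K[X_1,…,X_n] by its elements of degree at most d+1. In particular, D_I ≤ D_span(G,V) + 1, where D_I is the least degree bound for an ideal generating set of I. -/
open MvPolynomial

set_option synthInstance.maxHeartbeats 1000000
set_option maxHeartbeats 1000000


theorem aux_span_gives_gen
    (k : Type*) [Field k] (n : ℕ) (G : Type*) [Group G] [Fintype G]
    [MulSemiringAction G (MvPolynomial (Fin n) k)]
    [SMulCommClass G k (MvPolynomial (Fin n) k)]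
    [MulSemiringAction G (FractionRing (MvPolynomial (Fin n) k))]
    (hcomp : ∀ (g : G) (p : MvPolynomial (Fin n) k),
      g • (algebraMap (MvPolynomial (Fin n) k) (FractionRing (MvPolynomial (Fin n) k)) p)
        = algebraMap (MvPolynomial (Fin n) k) (FractionRing (MvPolynomial (Fin n) k)) (g • p))
    (d : ℕ)
    (hspan : Submodule.span
        (FixedPoints.subfield G (FractionRing (MvPolynomial (Fin n) k)))
        ((algebraMap (MvPolynomial (Fin n) k) (FractionRing (MvPolynomial (Fin n) k))) ''
          {p : MvPolynomial (Fin n) k | p.totalDegree ≤ d}) = ⊤) :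
    Ideal.span {p : MvPolynomial (Fin n)
        (FixedPoints.subfield G (FractionRing (MvPolynomial (Fin n) k))) |
        p ∈ RingHom.ker (MvPolynomial.aeval
          (R := FixedPoints.subfield G (FractionRing (MvPolynomial (Fin n) k)))
          (fun i : Fin n =>
            algebraMap (MvPolynomial (Fin n) k) (FractionRing (MvPolynomial (Fin n) k)) (X i)))
          ∧ p.totalDegree ≤ d + 1}
      = RingHom.ker (MvPolynomial.aeval
          (R := FixedPoints.subfield G (FractionRing (MvPolynomial (Fin n) k)))
          (fun i : Fin n =>
            algebraMap (MvPolynomial (Fin n) k) (FractionRing (MvPolynomial (Fin n) k)) (X i))) := by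
  set R := MvPolynomial (Fin n) k with hR
  set F := FractionRing R with hF
  set K := FixedPoints.subfield G F with hK
  set Ξ : MvPolynomial (Fin n) K →ₐ[K] F :=
    MvPolynomial.aeval (fun i : Fin n => algebraMap R F (X i)) with hΞdef
  set I : Ideal (MvPolynomial (Fin n) K) := RingHom.ker Ξ with hI
  set J : Ideal (MvPolynomial (Fin n) K) :=
    Ideal.span {p | p ∈ I ∧ p.totalDegree ≤ d + 1} with hJ
  -- the embedding k → K
  have hmem : ∀ c : k, algebraMap R F (C c) ∈ K := by
    intro c g
    rw [hcomp]
    congr 1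
    have h1 : (C c : R) = c • 1 := by rw [MvPolynomial.smul_eq_C_mul, mul_one]
    rw [h1, smul_comm, smul_one]
  let φ : k →+* K := ((algebraMap R F).comp (C : k →+* R)).codRestrict K.toSubring (fun c => hmem c)
  have hφ : ∀ c : k, (algebraMap K F) (φ c) = algebraMap R F (C c) := fun c => rfl
  -- Ξ ∘ map φ = algebraMap
  have hΞmap : ∀ p : R, Ξ (MvPolynomial.map φ p) = algebraMap R F p := by
    intro p
    induction p using MvPolynomial.induction_on with
    | C c => rw [map_C, hΞdef, aeval_C, hφ]
    | add p q hp hq => rw [map_add, map_add, map_add, hp, hq]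
    | mul_X p i hp => rw [map_mul, map_mul, map_mul, hp, map_X, hΞdef, aeval_X]
  -- surjectivity in degrees ≤ d
  have hsurj : ∀ y : F, ∃ q : MvPolynomial (Fin n) K, q.totalDegree ≤ d ∧ Ξ q = y := by
    intro y
    have hy : y ∈ Submodule.span K
        ((algebraMap R F) '' {p : R | p.totalDegree ≤ d}) := by
      rw [hspan]; trivial
    induction hy using Submodule.span_induction with
    | mem x hx =>
      obtain ⟨p, hp, rfl⟩ := hx
      simp only [Set.mem_setOf_eq] at hp
      refine ⟨MvPolynomial.map φ p, ?_, hΞmap p⟩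
      refine le_trans ?_ hp
      exact Finset.sup_mono (support_map_subset φ p)
    | zero => exact ⟨0, by simp⟩
    | add x y _ _ hx hy =>
      obtain ⟨q₁, hq₁, hΞ₁⟩ := hx
      obtain ⟨q₂, hq₂, hΞ₂⟩ := hy
      exact ⟨q₁ + q₂, le_trans (totalDegree_add q₁ q₂) (max_le hq₁ hq₂),
        by rw [map_add, hΞ₁, hΞ₂]⟩
    | smul c x _ hx =>
      obtain ⟨q, hq, hΞq⟩ := hx
      refine ⟨C c * q, ?_, ?_⟩
      · exact le_trans (totalDegree_mul _ _) (by simpa using hq)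
      · rw [map_mul, hΞq, hΞdef, aeval_C, Algebra.smul_def]
  -- any polynomial of degree ≤ d+1 decomposes
  have hdec : ∀ q : MvPolynomial (Fin n) K, q.totalDegree ≤ d + 1 →
      ∃ j r, j ∈ J ∧ r.totalDegree ≤ d ∧ q = j + r := by
    intro q hq
    obtain ⟨r, hr, hΞr⟩ := hsurj (Ξ q)
    refine ⟨q - r, r, ?_, hr, by ring⟩
    apply Ideal.subset_span
    constructor
    · rw [hI, RingHom.mem_ker, map_sub, hΞr, sub_self]
    · calc (q - r).totalDegree ≤ max q.totalDegree r.totalDegree := by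
            rw [sub_eq_add_neg]
            exact le_trans (totalDegree_add _ _) (by rw [totalDegree_neg])
        _ ≤ d + 1 := max_le hq (le_trans hr (Nat.le_succ d))
  -- every polynomial decomposes
  have hall : ∀ f : MvPolynomial (Fin n) K,
      ∃ j r, j ∈ J ∧ r.totalDegree ≤ d ∧ f = j + r := by
    intro f
    induction f using MvPolynomial.induction_on with
    | C a =>
      exact ⟨0, C a, J.zero_mem, by simp, (zero_add _).symm⟩
    | add p q hp hq =>
      obtain ⟨j₁, r₁, hj₁, hr₁, he₁⟩ := hp
      obtain ⟨j₂, r₂, hj₂, hr₂, he₂⟩ := hq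
      refine ⟨j₁ + j₂, r₁ + r₂, J.add_mem hj₁ hj₂,
        le_trans (totalDegree_add r₁ r₂) (max_le hr₁ hr₂), ?_⟩
      rw [he₁, he₂]; ring
    | mul_X p i hp =>
      obtain ⟨j₁, r₁, hj₁, hr₁, he₁⟩ := hp
      have hdeg : (r₁ * X i).totalDegree ≤ d + 1 :=
        le_trans (totalDegree_mul _ _) (by simpa [totalDegree_X] using hr₁)
      obtain ⟨j₂, r₂, hj₂, hr₂, he₂⟩ := hdec (r₁ * X i) hdeg
      refine ⟨j₁ * X i + j₂, r₂, J.add_mem (J.mul_mem_right _ hj₁) hj₂, hr₂, ?_⟩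
      rw [he₁, add_mul, he₂]; ring
  -- conclude
  have hJI : J ≤ I := by
    rw [hJ]
    exact Ideal.span_le.2 (fun p hp => hp.1)
  apply le_antisymm hJI
  intro f hf
  obtain ⟨j, r, hj, hr, hfr⟩ := hall f
  have hrI : r ∈ I := by
    have : r = f - j := by rw [hfr]; ring
    rw [this]
    exact I.sub_mem hf (hJI hj)
  have hrJ : r ∈ J := Ideal.subset_span ⟨hrI, le_trans hr (Nat.le_succ d)⟩
  rw [hfr]
  exact J.add_mem hj hrJ

/-- **Lemma (degree bound for the generic orbit ideal).** If the polynomials of degree `≤ d`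
span `k(V)` over `K = k(V)^G`, then the generic orbit ideal `I = ker Ξ ⊆ K[X_1,…,X_n]` is
generated by its elements of degree at most `d + 1`.  In particular `D_I ≤ D_span(G,V) + 1`. -/
theorem generic_orbit_ideal_degree_le_spanning_degree_add_one
    (k : Type*) [Field k] (n : ℕ) (G : Type*) [Group G] [Fintype G]
    [MulSemiringAction G (MvPolynomial (Fin n) k)]
    [SMulCommClass G k (MvPolynomial (Fin n) k)]
    (hlin : ∀ (g : G) (i : Fin n), ((g • (X i : MvPolynomial (Fin n) k)).IsHomogeneous 1))
    (hfaithful : ∀ g : G, (∀ p : MvPolynomial (Fin n) k, g • p = p) → g = 1)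
    [MulSemiringAction G (FractionRing (MvPolynomial (Fin n) k))]
    (hcomp : ∀ (g : G) (p : MvPolynomial (Fin n) k),
      g • (algebraMap (MvPolynomial (Fin n) k) (FractionRing (MvPolynomial (Fin n) k)) p)
        = algebraMap (MvPolynomial (Fin n) k) (FractionRing (MvPolynomial (Fin n) k)) (g • p))
    (d : ℕ)
    (hspan : Submodule.span
        (FixedPoints.subfield G (FractionRing (MvPolynomial (Fin n) k)))
        ((algebraMap (MvPolynomial (Fin n) k) (FractionRing (MvPolynomial (Fin n) k))) ''
          {p : MvPolynomial (Fin n) k | p.totalDegree ≤ d}) = ⊤) :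
    Ideal.span {p : MvPolynomial (Fin n)
        (FixedPoints.subfield G (FractionRing (MvPolynomial (Fin n) k))) |
        p ∈ RingHom.ker (MvPolynomial.aeval
          (R := FixedPoints.subfield G (FractionRing (MvPolynomial (Fin n) k)))
          (fun i : Fin n =>
            algebraMap (MvPolynomial (Fin n) k) (FractionRing (MvPolynomial (Fin n) k)) (X i)))
          ∧ p.totalDegree ≤ d + 1}
      = RingHom.ker (MvPolynomial.aeval
          (R := FixedPoints.subfield G (FractionRing (MvPolynomial (Fin n) k)))
          (fun i : Fin n =>
            algebraMap (MvPolynomial (Fin n) k) (FractionRing (MvPolynomial (Fin n) k)) (X i))) ∧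
    sInf {e : ℕ | Ideal.span {p : MvPolynomial (Fin n)
        (FixedPoints.subfield G (FractionRing (MvPolynomial (Fin n) k))) |
        p ∈ RingHom.ker (MvPolynomial.aeval
          (R := FixedPoints.subfield G (FractionRing (MvPolynomial (Fin n) k)))
          (fun i : Fin n =>
            algebraMap (MvPolynomial (Fin n) k) (FractionRing (MvPolynomial (Fin n) k)) (X i)))
          ∧ p.totalDegree ≤ e}
      = RingHom.ker (MvPolynomial.aeval
          (R := FixedPoints.subfield G (FractionRing (MvPolynomial (Fin n) k)))
          (fun i : Fin n =>
            algebraMap (MvPolynomial (Fin n) k) (FractionRing (MvPolynomial (Fin n) k)) (X i)))}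
      ≤ sInf {e : ℕ | Submodule.span
        (FixedPoints.subfield G (FractionRing (MvPolynomial (Fin n) k)))
        ((algebraMap (MvPolynomial (Fin n) k) (FractionRing (MvPolynomial (Fin n) k))) ''
          {p : MvPolynomial (Fin n) k | p.totalDegree ≤ e}) = ⊤} + 1 := by
  constructor
  · exact aux_span_gives_gen k n G hcomp d hspan
  · set S : Set ℕ := {e : ℕ | Submodule.span
        (FixedPoints.subfield G (FractionRing (MvPolynomial (Fin n) k)))
        ((algebraMap (MvPolynomial (Fin n) k) (FractionRing (MvPolynomial (Fin n) k))) ''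
          {p : MvPolynomial (Fin n) k | p.totalDegree ≤ e}) = ⊤} with hS
    have hdS : d ∈ S := hspan
    have hmemS : sInf S ∈ S := Nat.sInf_mem ⟨d, hdS⟩
    have hkey := aux_span_gives_gen k n G hcomp (sInf S) hmemS
    exact Nat.sInf_le hkey
end

section
/- Let R be a finite-dimensional algebra over a field k. Suppose A is a projective R-module, B_1,…,B_ℓ are indecomposable R-modules (all finite-dimensional over k), and φ : ⊕_{i=1}^ℓ B_i → A is a surjective R-module homomorphism. Then there exists a subset S ⊆ {1,…,ℓ} such that the restriction of φ to ⊕_{i∈S} B_i is an isomorphism onto A. -/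
set_option synthInstance.maxHeartbeats 1000000
set_option maxHeartbeats 1000000

open DirectSum


theorem MyAux.range_toModule {R : Type*} [Semiring R] {ι : Type*} [DecidableEq ι]
    {M : ι → Type*} [∀ i, AddCommMonoid (M i)] [∀ i, Module R (M i)]
    {N : Type*} [AddCommMonoid N] [Module R N] (f : ∀ i, M i →ₗ[R] N) :
    LinearMap.range (DirectSum.toModule R ι N f) = ⨆ i, LinearMap.range (f i) := by
  apply le_antisymm
  · rintro _ ⟨x, rfl⟩
    induction x using DirectSum.induction_on with
    | zero => simp
    | of i m =>
        rw [← DirectSum.lof_eq_of R, DirectSum.toModule_lof]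
        exact Submodule.mem_iSup_of_mem i ⟨m, rfl⟩
    | add x y hx hy => rw [map_add]; exact add_mem hx hy
  · rw [iSup_le_iff]; intro i
    rintro _ ⟨m, rfl⟩
    exact ⟨DirectSum.lof R ι M i m, DirectSum.toModule_lof R i m⟩

theorem MyAux.ker_component_le {R : Type*} [Semiring R] {ι : Type*} [DecidableEq ι]
    {M : ι → Type*} [∀ i, AddCommMonoid (M i)] [∀ i, Module R (M i)] (i : ι) :
    LinearMap.ker (DirectSum.component R ι M i) ≤
      ⨆ j ∈ {j : ι | j ≠ i}, LinearMap.range (DirectSum.lof R ι M j) := by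
  classical
  intro x hx
  have hx' : x i = 0 := hx
  rw [← DirectSum.sum_support_of x]
  refine Submodule.sum_mem _ fun j hj => ?_
  have hji : j ≠ i := by
    rintro rfl
    exact (DFinsupp.mem_support_iff.mp hj) hx'
  exact Submodule.mem_iSup_of_mem j (Submodule.mem_iSup_of_mem hji ⟨x j, rfl⟩)

/-- Fitting dichotomy: an endomorphism of a finite-dimensional indecomposable module is
bijective or nilpotent. -/
theorem MyAux.bijective_or_nilpotent
    (k : Type*) [Field k] (R : Type*) [Ring R] [Algebra k R]
    (V : Type*) [AddCommGroup V] [Module R V] [Module k V] [IsScalarTower k R V]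
    [FiniteDimensional k V]
    (hV : ∀ p q : Submodule R V, IsCompl p q → p = ⊥ ∨ q = ⊥)
    (f : V →ₗ[R] V) : Function.Bijective f ∨ IsNilpotent f := by
  haveI : IsArtinian R V := isArtinian_of_tower k inferInstance
  haveI : IsNoetherian R V := isNoetherian_of_tower k inferInstance
  obtain ⟨n, hn⟩ := Filter.eventually_atTop.mp f.eventually_isCompl_ker_pow_range_pow
  have h := hn (n + 1) (Nat.le_succ n)
  rcases hV _ _ h with hker | hrange
  · left
    have hinj : Function.Injective f := by
      intro x y hxy
      have hx : (f ^ (n + 1)) (x - y) = 0 := by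
        rw [pow_succ]
        simp [Module.End.mul_apply, map_sub, hxy]
      have := hker ▸ (LinearMap.mem_ker.mpr hx)
      simpa [sub_eq_zero] using this
    refine ⟨hinj, ?_⟩
    have : Function.Injective (f.restrictScalars k) := hinj
    exact (LinearMap.injective_iff_surjective).mp this
  · right
    exact ⟨n + 1, LinearMap.range_eq_bot.mp hrange⟩

theorem MyAux.not_bijective_add
    (k : Type*) [Field k] (R : Type*) [Ring R] [Algebra k R]
    (V : Type*) [AddCommGroup V] [Module R V] [Module k V] [IsScalarTower k R V]
    [FiniteDimensional k V]
    (hV : ∀ p q : Submodule R V, IsCompl p q → p = ⊥ ∨ q = ⊥)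
    (a b : V →ₗ[R] V) (ha : ¬ Function.Bijective a) (hb : ¬ Function.Bijective b) :
    ¬ Function.Bijective (a + b) := by
  intro h
  set u := LinearEquiv.ofBijective (a + b) h with hu
  have hid : (u.symm.toLinearMap ∘ₗ a) + (u.symm.toLinearMap ∘ₗ b) = LinearMap.id := by
    ext x
    simp only [LinearMap.add_apply, LinearMap.comp_apply, LinearMap.id_apply,
      LinearEquiv.coe_coe]
    rw [← map_add, ← LinearMap.add_apply]
    exact u.symm_apply_apply x
  have ha' : ¬ Function.Bijective (u.symm.toLinearMap ∘ₗ a) := fun hb' => by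
    refine ha ?_
    have heq : u.toLinearMap ∘ₗ (u.symm.toLinearMap ∘ₗ a) = a := by
      ext x; simp
    rw [← heq, LinearMap.coe_comp, LinearEquiv.coe_coe]
    exact u.bijective.comp hb'
  have hb' : ¬ Function.Bijective (u.symm.toLinearMap ∘ₗ b) := fun hb' => by
    refine hb ?_
    have heq : u.toLinearMap ∘ₗ (u.symm.toLinearMap ∘ₗ b) = b := by
      ext x; simp
    rw [← heq, LinearMap.coe_comp, LinearEquiv.coe_coe]
    exact u.bijective.comp hb'
  rcases MyAux.bijective_or_nilpotent k R V hV (u.symm.toLinearMap ∘ₗ a) with h1 | h1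
  · exact ha' h1
  · -- then u.symm ∘ b = 1 - nilpotent is a unit
    have : IsUnit ((1 : Module.End R V) - (u.symm.toLinearMap ∘ₗ a)) :=
      IsNilpotent.isUnit_one_sub h1
    have heq : u.symm.toLinearMap ∘ₗ b = (1 : Module.End R V) - (u.symm.toLinearMap ∘ₗ a) := by
      rw [eq_sub_iff_add_eq', hid]
      rfl
    rw [← heq] at this
    exact hb' (Module.End.isUnit_iff _ |>.mp this)

theorem MyAux.exists_indec_summand
    (k : Type*) [Field k] (R : Type*) [Ring R] [Algebra k R]
    (D : Type*) [AddCommGroup D] [Module R D] [Module k D] [IsScalarTower k R D]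
    [FiniteDimensional k D]
    (K : Submodule R D) (hK : K ≠ ⊥) (πK : D →ₗ[R] K) (hπK : ∀ x : K, πK x = x) :
    ∃ N : Submodule R D, N ≠ ⊥ ∧ N ≤ K ∧
      (∀ p q : Submodule R N, IsCompl p q → p = ⊥ ∨ q = ⊥) ∧
      ∃ π : D →ₗ[R] N, ∀ x : N, π x = x := by
  have H : ∀ (n : ℕ) (K : Submodule R D), Module.finrank k (K.restrictScalars k) ≤ n →
      K ≠ ⊥ → ∀ πK : D →ₗ[R] K, (∀ x : K, πK x = x) →
      ∃ N : Submodule R D, N ≠ ⊥ ∧ N ≤ K ∧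
        (∀ p q : Submodule R N, IsCompl p q → p = ⊥ ∨ q = ⊥) ∧
        ∃ π : D →ₗ[R] N, ∀ x : N, π x = x := by
    intro n
    induction n with
    | zero =>
      intro K hrank hK πK hπK
      exfalso
      apply hK
      have h0 : Module.finrank k (K.restrictScalars k) = 0 := Nat.le_zero.mp hrank
      have := Submodule.finrank_eq_zero.mp h0
      rwa [Submodule.restrictScalars_eq_bot_iff] at this
    | succ n ih =>
      intro K hrank hK πK hπK
      by_cases hind : ∀ p q : Submodule R K, IsCompl p q → p = ⊥ ∨ q = ⊥
      · exact ⟨K, hK, le_rfl, hind, πK, hπK⟩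
      push_neg at hind
      obtain ⟨p, q, hpq, hp, hq⟩ := hind
      set p' := p.map K.subtype with hp'def
      have hp'K : p' ≤ K := by
        rintro _ ⟨y, hy, rfl⟩; exact y.2
      have hp'ne : p' ≠ ⊥ := by
        intro h0
        apply hp
        have h1 : Submodule.comap K.subtype p' = p := by
          rw [hp'def, Submodule.comap_map_eq, Submodule.ker_subtype, sup_bot_eq]
        rw [h0, Submodule.comap_bot, Submodule.ker_subtype] at h1
        exact h1.symm
      have hp'neK : p' ≠ K := by
        intro hEq
        apply hq
        have hptop : p = ⊤ := by
          have h1 : Submodule.comap K.subtype p' = p := by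
            rw [hp'def, Submodule.comap_map_eq, Submodule.ker_subtype, sup_bot_eq]
          rw [hEq] at h1
          rw [← h1]
          ext y
          simp [y.2]
        have := hpq.disjoint
        rw [hptop, disjoint_comm, disjoint_top] at this
        exact this
      -- rank decreases
      have hlt : Module.finrank k (p'.restrictScalars k) < Module.finrank k (K.restrictScalars k) := by
        apply Submodule.finrank_lt_finrank_of_lt
        constructor
        · intro x hx
          exact hp'K hx
        · intro hle
          apply hp'neK
          apply le_antisymm hp'K
          intro x hx
          exact hle hx
      -- projection onto p'
      set e := Submodule.equivMapOfInjective K.subtype K.injective_subtype p with hedef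
      set π' : D →ₗ[R] p' :=
        e.toLinearMap ∘ₗ (Submodule.linearProjOfIsCompl p q hpq) ∘ₗ πK with hπ'def
      have hπ' : ∀ x : p', π' x = x := by
        intro x
        obtain ⟨y, hy, hxy⟩ := x.2
        have h1 : πK ↑x = y := by
          rw [← hxy]
          exact hπK y
        apply Subtype.ext
        have h2 : (Submodule.linearProjOfIsCompl p q hpq) y = ⟨y, hy⟩ :=
          Submodule.linearProjOfIsCompl_apply_left hpq ⟨y, hy⟩
        simp only [hπ'def, LinearMap.comp_apply, h1, h2]
        simp only [LinearEquiv.coe_coe]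
        rw [hedef, Submodule.coe_equivMapOfInjective_apply]
        exact hxy
      obtain ⟨N, hN1, hN2, hN3, hN4⟩ := ih p' (by omega) hp'ne π' hπ'
      exact ⟨N, hN1, le_trans hN2 hp'K, hN3, hN4⟩
  exact H (Module.finrank k (K.restrictScalars k)) K le_rfl hK πK hπK
theorem MyAux.key
    (k : Type*) [Field k] (R : Type*) [Ring R] [Algebra k R] [FiniteDimensional k R]
    (A : Type*) [AddCommGroup A] [Module R A] [Module k A] [IsScalarTower k R A]
    [FiniteDimensional k A] (hA : Module.Projective R A)
    (ℓ : ℕ) (B : Fin ℓ → Type*)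
    [∀ i, AddCommGroup (B i)] [∀ i, Module R (B i)]
    [∀ i, Module k (B i)] [∀ i, IsScalarTower k R (B i)] [∀ i, FiniteDimensional k (B i)]
    (hBindec : ∀ i, Nontrivial (B i) ∧
      ∀ p q : Submodule R (B i), IsCompl p q → p = ⊥ ∨ q = ⊥)
    (φ : (⨁ i, B i) →ₗ[R] A)
    (S : Finset (Fin ℓ))
    (hsurj : Function.Surjective (φ ∘ₗ (DirectSum.toModule R {i // i ∈ S} (⨁ i, B i)
        (fun i : {i // i ∈ S} => DirectSum.lof R (Fin ℓ) B i.1))))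
    (hninj : ¬ Function.Injective (φ ∘ₗ (DirectSum.toModule R {i // i ∈ S} (⨁ i, B i)
        (fun i : {i // i ∈ S} => DirectSum.lof R (Fin ℓ) B i.1)))) :
    ∃ i₀ ∈ S, Function.Surjective (φ ∘ₗ (DirectSum.toModule R {i // i ∈ S.erase i₀} (⨁ i, B i)
        (fun i : {i // i ∈ S.erase i₀} => DirectSum.lof R (Fin ℓ) B i.1))) := by
  classical
  haveI := hA
  set κ := {i // i ∈ S} with hκ
  set ι : (⨁ j : κ, B j.1) →ₗ[R] (⨁ i, B i) :=
    DirectSum.toModule R κ (⨁ i, B i) (fun i : κ => DirectSum.lof R (Fin ℓ) B i.1) with hι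
  set ψ : (⨁ j : κ, B j.1) →ₗ[R] A := φ ∘ₗ ι with hψ
  haveI instFD : FiniteDimensional k (⨁ j : κ, B j.1) :=
    Module.Finite.equiv (DirectSum.linearEquivFunOnFintype k κ (fun j => B j.1)).symm
  -- kernel nonzero
  have hker : LinearMap.ker ψ ≠ ⊥ := fun h => hninj (LinearMap.ker_eq_bot.mp h)
  -- splitting
  obtain ⟨σ, hσ⟩ := Module.projective_lifting_property ψ LinearMap.id hsurj
  have hψσ : ∀ a : A, ψ (σ a) = a := fun a => DFunLike.congr_fun hσ a
  have hσinj : Function.Injective σ := fun x y hxy => by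
    rw [← hψσ x, ← hψσ y, hxy]
  -- projection onto range σ
  set π₀ : (⨁ j : κ, B j.1) →ₗ[R] LinearMap.range σ :=
    (σ ∘ₗ ψ).codRestrict (LinearMap.range σ) (fun x => LinearMap.mem_range_self σ (ψ x))
    with hπ₀
  have hproj : ∀ x : LinearMap.range σ, π₀ x = x := by
    rintro ⟨_, a, rfl⟩
    apply Subtype.ext
    simp [hπ₀, hψσ]
  have hcompl0 : IsCompl (LinearMap.range σ) (LinearMap.ker π₀) :=
    LinearMap.isCompl_of_proj hproj
  have hkerπ₀ : LinearMap.ker π₀ = LinearMap.ker ψ := by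
    ext x
    constructor
    · intro hx
      have : σ (ψ x) = 0 := congrArg Subtype.val (LinearMap.mem_ker.mp hx)
      have := hσinj (a₂ := 0) (by simpa using this)
      simpa using this
    · intro hx
      apply Subtype.ext
      have : ψ x = 0 := hx
      simp [hπ₀, this]
  rw [hkerπ₀] at hcompl0
  set πK := Submodule.linearProjOfIsCompl _ _ hcompl0.symm with hπK
  obtain ⟨N, hN0, hNker, hNind, π, hπid⟩ :=
    MyAux.exists_indec_summand k R (⨁ j : κ, B j.1) (LinearMap.ker ψ) hker πK
      (fun x => Submodule.linearProjOfIsCompl_apply_left hcompl0.symm x)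
  haveI : FiniteDimensional k N := inferInstanceAs (FiniteDimensional k (N.restrictScalars k))
  haveI : Nontrivial N := Submodule.nontrivial_iff_ne_bot.mpr hN0
  -- decomposition of identity on N
  set g : κ → Module.End R N := fun j =>
    π ∘ₗ (DirectSum.lof R κ (fun j : κ => B j.1) j) ∘ₗ
      (DirectSum.component R κ (fun j : κ => B j.1) j) ∘ₗ N.subtype with hg
  have hsum : ∑ j : κ, g j = LinearMap.id := by
    ext x
    rw [LinearMap.sum_apply]
    have h1 : ∀ j : κ, g j x = π (DirectSum.lof R κ (fun j : κ => B j.1) j ((x : ⨁ j : κ, B j.1) j)) :=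
      fun j => rfl
    simp_rw [h1]
    rw [← map_sum]
    have h2 : (∑ j : κ, DirectSum.lof R κ (fun j : κ => B j.1) j ((x : ⨁ j : κ, B j.1) j))
        = (x : ⨁ j : κ, B j.1) := by
      simp_rw [DirectSum.lof_eq_of]
      exact DirectSum.sum_univ_of _
    rw [h2, hπid]
    rfl
  -- some component map is bijective
  have hex : ∃ j : κ, Function.Bijective (g j) := by
    by_contra hc
    push_neg at hc
    have hnb : ¬ Function.Bijective (⇑(∑ j : κ, g j)) := by
      refine Finset.sum_induction g (fun f => ¬ Function.Bijective f)
        (fun a b ha hb => MyAux.not_bijective_add k R N hNind a b ha hb) ?_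
        (fun j _ => hc j)
      intro h0
      obtain ⟨x, hx⟩ := exists_ne (0 : N)
      exact hx (h0.1 (by simp))
    rw [hsum] at hnb
    exact hnb Function.bijective_id
  obtain ⟨j0, hj0⟩ := hex
  -- the component map f : N → B j0 is an isomorphism
  set f : N →ₗ[R] B j0.1 :=
    (DirectSum.component R κ (fun j : κ => B j.1) j0) ∘ₗ N.subtype with hf
  set gm : B j0.1 →ₗ[R] N := π ∘ₗ DirectSum.lof R κ (fun j : κ => B j.1) j0 with hgm
  have hgf : ∀ y : N, gm (f y) = g j0 y := fun y => rfl
  set u := LinearEquiv.ofBijective (g j0) hj0 with hu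
  have hgfu : ∀ y : N, gm (f y) = u y := fun y => rfl
  have hfinj : Function.Injective f := by
    intro x y hxy
    apply hj0.injective
    show g j0 x = g j0 y
    rw [← hgf, ← hgf, hxy]
  set h : Module.End R (B j0.1) := f ∘ₗ u.symm.toLinearMap ∘ₗ gm with hh
  have hhy : ∀ y, h y = f (u.symm (gm y)) := fun y => rfl
  have hhf : ∀ y : N, h (f y) = f y := by
    intro y
    rw [hhy, hgfu, u.symm_apply_apply]
  have hh2 : ∀ y, h (h y) = h y := by
    intro y
    rw [hhy y, hhf]
  have hcompl2 : IsCompl (LinearMap.range h) (LinearMap.ker h) := by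
    constructor
    · rw [disjoint_iff, Submodule.eq_bot_iff]
      rintro x ⟨⟨y, rfl⟩, hxk⟩
      have hk : h y ∈ LinearMap.ker h := hxk
      have hk2 := LinearMap.mem_ker.mp hk
      rwa [hh2] at hk2
    · rw [codisjoint_iff, Submodule.eq_top_iff']
      intro x
      rw [show x = h x + (x - h x) by abel]
      refine Submodule.add_mem_sup (LinearMap.mem_range_self h x) ?_
      rw [LinearMap.mem_ker, map_sub, hh2, sub_self]
  have hfbij : Function.Bijective f := by
    rcases (hBindec j0.1).2 _ _ hcompl2 with hr | hk
    · exfalso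
      have hh0 : h = 0 := LinearMap.range_eq_bot.mp hr
      obtain ⟨x, hx⟩ := exists_ne (0 : N)
      apply hx
      apply hfinj
      rw [← hhf x, hh0, map_zero]
      rfl
    · have hinj_h : Function.Injective h := LinearMap.ker_eq_bot.mp hk
      have hid : ∀ x, h x = x := fun x => hinj_h (hh2 x)
      refine ⟨hfinj, fun x => ⟨u.symm (gm x), ?_⟩⟩
      rw [← hhy, hid]
  -- exchange: IsCompl N (ker component_{j0})
  set eN := LinearEquiv.ofBijective f hfbij with heN
  set π' : (⨁ j : κ, B j.1) →ₗ[R] N :=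
    eN.symm.toLinearMap ∘ₗ (DirectSum.component R κ (fun j : κ => B j.1) j0) with hπ'
  have hπ'id : ∀ x : N, π' x = x := by
    intro x
    show eN.symm ((DirectSum.component R κ (fun j : κ => B j.1) j0) x) = x
    have : (DirectSum.component R κ (fun j : κ => B j.1) j0) (x : ⨁ j : κ, B j.1) = f x := rfl
    rw [this]
    exact eN.symm_apply_apply x
  have hNcompl : IsCompl N (LinearMap.ker π') := LinearMap.isCompl_of_proj hπ'id
  have hkerπ' : LinearMap.ker π' = LinearMap.ker (DirectSum.component R κ (fun j : κ => B j.1) j0) := by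
    ext x
    constructor
    · intro hx
      have : eN.symm ((DirectSum.component R κ (fun j : κ => B j.1) j0) x) = 0 := hx
      have := eN.symm.injective (a₂ := 0) (by simpa using this)
      simpa using this
    · intro hx
      show eN.symm ((DirectSum.component R κ (fun j : κ => B j.1) j0) x) = 0
      rw [LinearMap.mem_ker.mp hx, map_zero]
  rw [hkerπ'] at hNcompl
  -- surjectivity after removing j0
  refine ⟨j0.1, j0.2, ?_⟩
  rw [← LinearMap.range_eq_top, Submodule.eq_top_iff']
  intro a
  -- a = ψ x for x in ker of component j0
  have htop : Submodule.map ψ (LinearMap.ker (DirectSum.component R κ (fun j : κ => B j.1) j0)) = ⊤ := by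
    have h1 : N ⊔ LinearMap.ker (DirectSum.component R κ (fun j : κ => B j.1) j0) = ⊤ :=
      codisjoint_iff.mp hNcompl.codisjoint
    have h2 : Submodule.map ψ ⊤ = ⊤ := by
      rw [Submodule.map_top, LinearMap.range_eq_top]
      exact hsurj
    rw [← h1, Submodule.map_sup] at h2
    have h3 : Submodule.map ψ N = ⊥ := by
      rw [Submodule.eq_bot_iff]
      rintro _ ⟨x, hx, rfl⟩
      exact hNker hx
    rw [h3, bot_sup_eq] at h2
    exact h2
  obtain ⟨x, hx, rfl⟩ : ∃ x ∈ LinearMap.ker (DirectSum.component R κ (fun j : κ => B j.1) j0), ψ x = a := by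
    have : a ∈ Submodule.map ψ (LinearMap.ker (DirectSum.component R κ (fun j : κ => B j.1) j0)) := by
      rw [htop]; trivial
    exact this
  -- ψ x = φ (ι x) and ι x lies in the sup of the other ranges
  have hmem : ι x ∈ ⨆ j : {i // i ∈ S.erase j0.1}, LinearMap.range (DirectSum.lof R (Fin ℓ) B j.1) := by
    have h4 := MyAux.ker_component_le (R := R) (M := fun j : κ => B j.1) j0 hx
    have h5 : Submodule.map ι (⨆ j ∈ {j : κ | j ≠ j0}, LinearMap.range (DirectSum.lof R κ (fun j : κ => B j.1) j))
        ≤ ⨆ j : {i // i ∈ S.erase j0.1}, LinearMap.range (DirectSum.lof R (Fin ℓ) B j.1) := by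
      rw [Submodule.map_iSup]
      refine iSup_le fun j => ?_
      rw [Submodule.map_iSup]
      refine iSup_le fun hj => ?_
      rw [← LinearMap.range_comp]
      have hcomp : ι ∘ₗ DirectSum.lof R κ (fun j : κ => B j.1) j = DirectSum.lof R (Fin ℓ) B j.1 := by
        refine LinearMap.ext fun m => ?_
        show ι (DirectSum.lof R κ (fun j : κ => B j.1) j m) = DirectSum.lof R (Fin ℓ) B j.1 m
        rw [hι]
        exact DirectSum.toModule_lof (R := R) (ι := κ) (N := ⨁ i, B i) (M := fun j : κ => B j.1) (φ := fun i : κ => DirectSum.lof R (Fin ℓ) B i.1) j m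
      rw [hcomp]
      have hjmem : j.1 ∈ S.erase j0.1 := Finset.mem_erase.mpr ⟨fun hEq => hj (Subtype.ext hEq), j.2⟩
      exact le_iSup (fun j' : {i // i ∈ S.erase j0.1} => LinearMap.range (DirectSum.lof R (Fin ℓ) B j'.1)) ⟨j.1, hjmem⟩
    exact h5 ⟨x, h4, rfl⟩
  -- conclude
  have h6 : LinearMap.range (φ ∘ₗ (DirectSum.toModule R {i // i ∈ S.erase j0.1} (⨁ i, B i)
      (fun i : {i // i ∈ S.erase j0.1} => DirectSum.lof R (Fin ℓ) B i.1))) =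
      Submodule.map φ (⨆ j : {i // i ∈ S.erase j0.1}, LinearMap.range (DirectSum.lof R (Fin ℓ) B j.1)) := by
    rw [LinearMap.range_comp, MyAux.range_toModule]
  rw [h6]
  exact ⟨ι x, hmem, rfl⟩

/-- **Lemma (sections of surjections onto projectives respecting indecomposables).** Let `R`
be a finite-dimensional algebra over a field `k`, `A` a projective `R`-module,
`B_1,…,B_ℓ` indecomposable `R`-modules (all finite-dimensional over `k`), and
`φ : ⊕ᵢ Bᵢ → A` a surjective `R`-module homomorphism.  Then there is a subset
`S ⊆ {1,…,ℓ}` such that the restriction of `φ` to `⊕_{i∈S} Bᵢ` is an isomorphism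
onto `A`. -/
theorem exists_subset_restriction_isomorphism_of_surjective_onto_projective
    (k : Type*) [Field k] (R : Type*) [Ring R] [Algebra k R] [FiniteDimensional k R]
    (A : Type*) [AddCommGroup A] [Module R A] [Module k A] [IsScalarTower k R A]
    [FiniteDimensional k A] (hA : Module.Projective R A)
    (ℓ : ℕ) (B : Fin ℓ → Type*)
    [∀ i, AddCommGroup (B i)] [∀ i, Module R (B i)]
    [∀ i, Module k (B i)] [∀ i, IsScalarTower k R (B i)] [∀ i, FiniteDimensional k (B i)]
    (hBindec : ∀ i, Nontrivial (B i) ∧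
      ∀ p q : Submodule R (B i), IsCompl p q → p = ⊥ ∨ q = ⊥)
    (φ : (⨁ i, B i) →ₗ[R] A) (hφ : Function.Surjective φ) :
    ∃ S : Finset (Fin ℓ), Function.Bijective
      (φ ∘ₗ (DirectSum.toModule R {i // i ∈ S} (⨁ i, B i)
        (fun i : {i // i ∈ S} => DirectSum.lof R (Fin ℓ) B i.1))) := by
  classical
  have Hsurj : ∀ (n : ℕ) (S : Finset (Fin ℓ)), S.card = n →
      Function.Surjective (φ ∘ₗ (DirectSum.toModule R {i // i ∈ S} (⨁ i, B i)
        (fun i : {i // i ∈ S} => DirectSum.lof R (Fin ℓ) B i.1))) →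
      ∃ S' : Finset (Fin ℓ), Function.Bijective (φ ∘ₗ (DirectSum.toModule R {i // i ∈ S'} (⨁ i, B i)
        (fun i : {i // i ∈ S'} => DirectSum.lof R (Fin ℓ) B i.1))) := by
    intro n
    induction n using Nat.strong_induction_on with
    | _ n ih =>
      intro S hcard hs
      by_cases hinj : Function.Injective (φ ∘ₗ (DirectSum.toModule R {i // i ∈ S} (⨁ i, B i)
        (fun i : {i // i ∈ S} => DirectSum.lof R (Fin ℓ) B i.1)))
      · exact ⟨S, hinj, hs⟩
      · obtain ⟨i₀, hi₀, hs'⟩ := MyAux.key k R A hA ℓ B hBindec φ S hs hinj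
        exact ih (S.erase i₀).card (hcard ▸ Finset.card_erase_lt_of_mem hi₀) _ rfl hs'
  refine Hsurj Finset.univ.card Finset.univ rfl ?_
  rw [← LinearMap.range_eq_top, LinearMap.range_comp, MyAux.range_toModule]
  have htop : (⨆ i : {i // i ∈ (Finset.univ : Finset (Fin ℓ))},
      LinearMap.range (DirectSum.lof R (Fin ℓ) B i.1)) = ⊤ := by
    rw [Submodule.eq_top_iff']
    intro x
    rw [← DirectSum.sum_univ_of x]
    refine Submodule.sum_mem _ fun j _ => ?_
    exact Submodule.mem_iSup_of_mem ⟨j, Finset.mem_univ j⟩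
      ⟨x j, DirectSum.lof_eq_of R (Fin ℓ) B j (x j)⟩
  rw [htop, Submodule.map_top, LinearMap.range_eq_top]
  exact hφ
end

section
/- Suppose k is an algebraically closed field, R is a finite-dimensional k-algebra, and A is a finite-dimensional indecomposable R-module. Then for any field extension F of k, the base change F ⊗_k A is an indecomposable module over the F-algebra F ⊗_k R. -/
/-!
Fitting's lemma makes `End_R A` local: every endomorphism is a unit or nilpotent. Over the
algebraically closed `k` an endomorphism minus one of its eigenvalues is not injective, hence
nilpotent, so `End_R A = k ⊕ J` with `J` the Jacobson radical, a nilpotent ideal since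
`End_R A` is Artinian.

For an endomorphism `φ` of `F ⊗ A` and a `k`-basis `(b s)` of `F`, write
`φ (1 ⊗ a) = ∑ b s ⊗ φ_s a` with `φ_s ∈ End_R A` and `φ_s = c_s + n_s`, `n_s ∈ J`. With
`c = ∑ c_s b s ∈ F`, the map `ν = φ - c` sends `F ⊗ J^j A` into `F ⊗ J^(j+1) A`, so it is
nilpotent. Thus every endomorphism of `F ⊗ A` is a unit (`c ≠ 0`) or nilpotent (`c = 0`), and a
projection onto a direct summand must be `0` or `1`.
-/

open TensorProduct

namespace Module

def IsIndecomposable (R M : Type*) [Semiring R] [AddCommMonoid M] [Module R M] : Prop :=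
  Nontrivial M ∧ ∀ p q : Submodule R M, IsCompl p q → p = ⊥ ∨ q = ⊥

variable {R M : Type*} [Ring R] [AddCommGroup M] [Module R M]

theorem IsIndecomposable.isUnit_or_isNilpotent [IsArtinian R M] [IsNoetherian R M]
    (hM : IsIndecomposable R M) (f : End R M) : IsUnit f ∨ IsNilpotent f := by
  obtain ⟨n, hn⟩ := Filter.eventually_atTop.mp f.eventually_isCompl_ker_pow_range_pow
  rcases hM.2 _ _ (hn (n + 1) n.le_succ) with hker | hrange
  · have hinj : Function.Injective (⇑(f ^ n) ∘ ⇑f) := by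
      rw [← End.coe_mul, ← pow_succ]
      exact LinearMap.ker_eq_bot.mp hker
    exact Or.inl <| (End.isUnit_iff f).mpr <|
      IsArtinian.bijective_of_injective_endomorphism f hinj.of_comp
  · exact Or.inr ⟨n + 1, LinearMap.range_eq_bot.mp hrange⟩

theorem isIndecomposable_of_isUnit_or_isNilpotent [Nontrivial M]
    (h : ∀ f : End R M, IsUnit f ∨ IsNilpotent f) : IsIndecomposable R M := by
  refine ⟨‹_›, fun p q hpq => ?_⟩
  have hπ := p.isIdempotentElem_projection hpq
  rcases h (p.projection q hpq) with hunit | hnil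
  · rw [← Submodule.ker_projection hpq, (IsIdempotentElem.iff_eq_one_of_isUnit hunit).mp hπ]
    exact Or.inr LinearMap.ker_id
  · rw [← Submodule.range_projection hpq, hπ.eq_zero_of_isNilpotent hnil]
    exact Or.inl LinearMap.range_zero

end Module

theorem mem_jacobson_of_isNilpotent {E : Type*} [Ring E] [IsDedekindFiniteMonoid E]
    (hE : ∀ x : E, IsUnit x ∨ IsNilpotent x) {x : E} (hx : IsNilpotent x) :
    x ∈ Ring.jacobson E := by
  nontriviality E
  rw [← Ideal.jacobson_bot, Ideal.mem_jacobson_iff]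
  intro y
  have hyx : IsNilpotent (y * x) :=
    (hE _).resolve_left fun hunit => hx.not_isUnit (isUnit_of_mul_isUnit_right hunit)
  obtain ⟨z, hz⟩ := hyx.isUnit_add_one.exists_left_inv
  exact ⟨z, by rw [Ideal.mem_bot, ← hz]; noncomm_ring⟩

theorem Module.End.exists_isNilpotent_sub_algebraMap {k R A : Type*} [Field k] [IsAlgClosed k]
    [Ring R] [Algebra k R] [AddCommGroup A] [Module R A] [Module k A] [IsScalarTower k R A]
    [FiniteDimensional k A] [Nontrivial A] (hA : ∀ f : End R A, IsUnit f ∨ IsNilpotent f)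
    (f : End R A) : ∃ c : k, IsNilpotent (f - algebraMap k (End R A) c) := by
  obtain ⟨c, hc⟩ := exists_eigenvalue (f.restrictScalars k)
  obtain ⟨a, ha⟩ := hc.exists_hasEigenvector
  refine ⟨c, (hA _).resolve_left fun hunit => ha.2 (((End.isUnit_iff _).mp hunit).1 ?_)⟩
  rw [LinearMap.sub_apply, algebraMap_end_apply, map_zero]
  exact sub_eq_zero.mpr ha.apply_eq_smul

theorem LinearMap.exists_finset_forall_support_subset {K V S M : Type*} [Semiring K]
    [AddCommMonoid V] [Module K V] [Module.Finite K V] [AddCommMonoid M] [Module K M]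
    (Θ : V →ₗ[K] S →₀ M) : ∃ T : Finset S, ∀ v, (Θ v).support ⊆ T := by
  classical
  obtain ⟨s, hs⟩ := Module.Finite.fg_top (R := K) (M := V)
  let T := s.biUnion fun v => (Θ v).support
  have hspan : Submodule.span K (s : Set V) ≤ (Finsupp.supported M K (T : Set S)).comap Θ :=
    Submodule.span_le.mpr fun v hv => (Finsupp.mem_supported K _).mpr <| by
      simpa using Finset.subset_biUnion_of_mem (fun v => (Θ v).support) hv
  exact ⟨T, fun v => (Finsupp.mem_supported K _).mp (hspan (hs ▸ Submodule.mem_top))⟩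

section Filtration

variable {k R A : Type*} [Field k] [Ring R] [AddCommGroup A] [Module R A] [Module k A]
  (F : Type*) [Field F] [Algebra k F]

def baseChangeRange (I : Ideal (Module.End R A)) : Submodule F (F ⊗[k] A) :=
  Submodule.span F {x | ∃ n ∈ I, ∃ a, (1 : F) ⊗ₜ[k] n a = x}

theorem baseChangeRange_top : baseChangeRange (k := k) F (⊤ : Ideal (Module.End R A)) = ⊤ := by
  rw [eq_top_iff, ← Submodule.baseChange_top (R := k) (M := A) F, Submodule.baseChange_eq_span]
  refine Submodule.span_mono ?_
  rintro _ ⟨a, -, rfl⟩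
  exact ⟨1, Submodule.mem_top, a, rfl⟩

theorem baseChangeRange_bot : baseChangeRange (k := k) F (⊥ : Ideal (Module.End R A)) = ⊥ := by
  refine Submodule.span_eq_bot.mpr ?_
  rintro _ ⟨n, hn, a, rfl⟩
  rw [Ideal.mem_bot.mp hn, LinearMap.zero_apply, tmul_zero]

variable {F} {S : Type*} {ν : Module.End F (F ⊗[k] A)} {b : S → F} {N : S → Module.End R A}
  {T : Finset S}

theorem baseChangeRange_le_comap_mul
    (hν : ∀ a, ν ((1 : F) ⊗ₜ[k] a) = ∑ s ∈ T, b s ⊗ₜ[k] N s a)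
    {J : Ideal (Module.End R A)} (hN : ∀ s, N s ∈ J) (I : Ideal (Module.End R A)) :
    baseChangeRange F I ≤ (baseChangeRange F (J * I)).comap ν := by
  refine Submodule.span_le.mpr ?_
  rintro _ ⟨n, hn, a, rfl⟩
  rw [SetLike.mem_coe, Submodule.mem_comap, hν]
  refine Submodule.sum_mem _ fun s _ => ?_
  have htmul : b s ⊗ₜ[k] N s (n a) = b s • ((1 : F) ⊗ₜ[k] (N s * n) a) := by
    rw [smul_tmul', smul_eq_mul, mul_one, Module.End.mul_apply]
  rw [htmul]
  exact Submodule.smul_mem _ _ (Submodule.subset_span ⟨_, Ideal.mul_mem_mul (hN s) hn, a, rfl⟩)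

theorem isNilpotent_of_apply_one_tmul_eq_sum
    (hν : ∀ a, ν ((1 : F) ⊗ₜ[k] a) = ∑ s ∈ T, b s ⊗ₜ[k] N s a)
    {J : Ideal (Module.End R A)} [J.IsTwoSided] (hJ : IsNilpotent J) (hN : ∀ s, N s ∈ J) :
    IsNilpotent ν := by
  have hpow : ∀ j x, (ν ^ j) x ∈ baseChangeRange F (J ^ j) := by
    intro j
    induction j with
    | zero => simp [Submodule.pow_zero, Ideal.one_eq_top, baseChangeRange_top]
    | succ j ih =>
      intro x
      rw [pow_succ', Module.End.mul_apply, Ideal.IsTwoSided.pow_succ]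
      exact baseChangeRange_le_comap_mul hν hN _ (ih x)
  obtain ⟨m, hm⟩ := hJ
  refine ⟨m, LinearMap.ext fun x => ?_⟩
  have := hpow m x
  rwa [hm, Submodule.zero_eq_bot, baseChangeRange_bot, Submodule.mem_bot] at this

end Filtration

section BaseChange

variable {k R A F : Type*} [Field k] [Ring R] [Algebra k R] [AddCommGroup A] [Module R A]
  [Module k A] [Field F] [Algebra k F] [Module (F ⊗[k] R) (F ⊗[k] A)]

variable (k R A F) in
def IsBaseChangeAction : Prop :=
  ∀ (f g : F) (r : R) (a : A),
    (f ⊗ₜ[k] r : F ⊗[k] R) • (g ⊗ₜ[k] a : F ⊗[k] A) = (f * g) ⊗ₜ[k] (r • a)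

theorem IsBaseChangeAction.tmul_one_smul (hsmul : IsBaseChangeAction k R A F) (f : F)
    (x : F ⊗[k] A) : (f ⊗ₜ[k] (1 : R)) • x = f • x := by
  induction x using TensorProduct.induction_on with
  | zero => rw [smul_zero, smul_zero]
  | tmul g a => rw [hsmul, one_smul, smul_tmul', smul_eq_mul]
  | add x y hx hy => rw [smul_add, hx, hy, smul_add]

theorem IsBaseChangeAction.one_tmul_smul_one_tmul (hsmul : IsBaseChangeAction k R A F) (r : R)
    (a : A) : ((1 : F) ⊗ₜ[k] r) • ((1 : F) ⊗ₜ[k] a) = (1 : F) ⊗ₜ[k] (r • a) := by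
  rw [hsmul, one_mul]

def IsBaseChangeAction.restrictScalarsLeft (hsmul : IsBaseChangeAction k R A F) :
    Module.End (F ⊗[k] R) (F ⊗[k] A) →+* Module.End F (F ⊗[k] A) where
  toFun φ :=
    { toFun := φ
      map_add' := φ.map_add
      map_smul' f x := by simp only [← hsmul.tmul_one_smul, map_smul, RingHom.id_apply] }
  map_one' := rfl
  map_mul' _ _ := rfl
  map_zero' := rfl
  map_add' _ _ := rfl

theorem IsBaseChangeAction.restrictScalarsLeft_apply (hsmul : IsBaseChangeAction k R A F)
    (φ : Module.End (F ⊗[k] R) (F ⊗[k] A)) (x : F ⊗[k] A) :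
    hsmul.restrictScalarsLeft φ x = φ x := rfl

theorem IsBaseChangeAction.restrictScalarsLeft_injective (hsmul : IsBaseChangeAction k R A F) :
    Function.Injective hsmul.restrictScalarsLeft := fun _ _ h =>
  LinearMap.ext fun x => (DFunLike.congr_fun h x :)

theorem IsBaseChangeAction.isUnit_restrictScalarsLeft_iff (hsmul : IsBaseChangeAction k R A F)
    (φ : Module.End (F ⊗[k] R) (F ⊗[k] A)) :
    IsUnit (hsmul.restrictScalarsLeft φ) ↔ IsUnit φ := by
  rw [Module.End.isUnit_iff, Module.End.isUnit_iff]
  rfl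

variable [IsScalarTower k R A] {S : Type*} [DecidableEq S] (b : Module.Basis S k F)

theorem IsBaseChangeAction.equivFinsuppOfBasisLeft_one_tmul_smul
    (hsmul : IsBaseChangeAction k R A F) (r : R) (x : F ⊗[k] A) (s : S) :
    equivFinsuppOfBasisLeft b (((1 : F) ⊗ₜ[k] r) • x) s = r • equivFinsuppOfBasisLeft b x s := by
  induction x using TensorProduct.induction_on with
  | zero => simp
  | tmul g a =>
    rw [hsmul, one_mul, equivFinsuppOfBasisLeft_apply_tmul_apply,
      equivFinsuppOfBasisLeft_apply_tmul_apply, smul_comm]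
  | add x y hx hy => simp only [smul_add, map_add, Finsupp.add_apply, hx, hy]

noncomputable def IsBaseChangeAction.coordEnd
    (hsmul : IsBaseChangeAction k R A F) (φ : Module.End (F ⊗[k] R) (F ⊗[k] A)) (s : S) :
    Module.End R A where
  toFun a := equivFinsuppOfBasisLeft b (φ ((1 : F) ⊗ₜ[k] a)) s
  map_add' a a' := by simp only [tmul_add, map_add, Finsupp.add_apply]
  map_smul' r a := by
    rw [← hsmul.one_tmul_smul_one_tmul, map_smul, hsmul.equivFinsuppOfBasisLeft_one_tmul_smul b,
      RingHom.id_apply]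

variable [FiniteDimensional k A]

theorem IsBaseChangeAction.exists_finset_apply_one_tmul_eq_sum
    (hsmul : IsBaseChangeAction k R A F) (φ : Module.End (F ⊗[k] R) (F ⊗[k] A)) :
    ∃ T : Finset S, ∀ a : A, φ ((1 : F) ⊗ₜ[k] a) = ∑ s ∈ T, b s ⊗ₜ[k] hsmul.coordEnd b φ s a := by
  obtain ⟨T, hT⟩ := LinearMap.exists_finset_forall_support_subset
    ((equivFinsuppOfBasisLeft b).toLinearMap ∘ₗ
      (hsmul.restrictScalarsLeft φ).restrictScalars k ∘ₗ TensorProduct.mk k F A 1)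
  refine ⟨T, fun a => ?_⟩
  have hTa : (equivFinsuppOfBasisLeft b (φ ((1 : F) ⊗ₜ[k] a))).support ⊆ T := hT a
  conv_lhs => rw [← (equivFinsuppOfBasisLeft b).symm_apply_apply (φ _),
    equivFinsuppOfBasisLeft_symm_apply, Finsupp.sum_of_support_subset _ hTa _
      (fun s _ => tmul_zero A (b s))]
  rfl

theorem IsBaseChangeAction.exists_isNilpotent_sub_algebraMap
    (hsmul : IsBaseChangeAction k R A F) (J : Ideal (Module.End R A)) [J.IsTwoSided]
    (hJ : IsNilpotent J)
    (hE : ∀ f : Module.End R A, ∃ c : k, f - algebraMap k (Module.End R A) c ∈ J)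
    (φ : Module.End (F ⊗[k] R) (F ⊗[k] A)) :
    ∃ c : F, IsNilpotent (hsmul.restrictScalarsLeft φ - algebraMap F (Module.End F _) c) := by
  classical
  let b := Module.Basis.ofVectorSpace k F
  choose μ hμ using fun s => hE (hsmul.coordEnd b φ s)
  obtain ⟨T, hT⟩ := hsmul.exists_finset_apply_one_tmul_eq_sum b φ
  refine ⟨∑ s ∈ T, μ s • b s,
    isNilpotent_of_apply_one_tmul_eq_sum (T := T) (b := b) (fun a => ?_) hJ hμ⟩
  rw [LinearMap.sub_apply, Module.algebraMap_end_apply, hsmul.restrictScalarsLeft_apply, hT,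
    smul_tmul', smul_eq_mul, mul_one, sum_tmul, ← Finset.sum_sub_distrib]
  refine Finset.sum_congr rfl fun s _ => ?_
  rw [LinearMap.sub_apply, Module.algebraMap_end_apply, tmul_sub, smul_tmul]

theorem IsBaseChangeAction.isUnit_or_isNilpotent (hsmul : IsBaseChangeAction k R A F)
    (J : Ideal (Module.End R A)) [J.IsTwoSided] (hJ : IsNilpotent J)
    (hE : ∀ f : Module.End R A, ∃ c : k, f - algebraMap k (Module.End R A) c ∈ J)
    (φ : Module.End (F ⊗[k] R) (F ⊗[k] A)) : IsUnit φ ∨ IsNilpotent φ := by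
  obtain ⟨c, hc⟩ := hsmul.exists_isNilpotent_sub_algebraMap J hJ hE φ
  rcases eq_or_ne c 0 with rfl | hc0
  · rw [map_zero, sub_zero (G := Module.End F (F ⊗[k] A))] at hc
    exact Or.inr ((IsNilpotent.map_iff hsmul.restrictScalarsLeft_injective).mp hc)
  · refine Or.inl ((hsmul.isUnit_restrictScalarsLeft_iff φ).mp ?_)
    have hunit := (IsUnit.mk0 c hc0).map (algebraMap F (Module.End F (F ⊗[k] A)))
    have := hc.isUnit_add_left_of_commute (R := Module.End F (F ⊗[k] A)) hunit
      (Algebra.commutes c _).symm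
    rwa [add_sub_cancel (G := Module.End F (F ⊗[k] A))] at this

end BaseChange

theorem baseChange_indecomposable_of_isAlgClosed_general
    (k : Type*) [Field k] [IsAlgClosed k]
    (R : Type*) [Ring R] [Algebra k R]
    (A : Type*) [AddCommGroup A] [Module R A] [Module k A] [IsScalarTower k R A]
    [FiniteDimensional k A]
    (hA : Nontrivial A ∧ ∀ p q : Submodule R A, IsCompl p q → p = ⊥ ∨ q = ⊥)
    (F : Type*) [Field F] [Algebra k F]
    [Module (F ⊗[k] R) (F ⊗[k] A)]
    (hsmul : ∀ (f g : F) (r : R) (a : A),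
      (f ⊗ₜ[k] r : F ⊗[k] R) • (g ⊗ₜ[k] a : F ⊗[k] A) = (f * g) ⊗ₜ[k] (r • a)) :
    Nontrivial (F ⊗[k] A) ∧
      ∀ p q : Submodule (F ⊗[k] R) (F ⊗[k] A), IsCompl p q → p = ⊥ ∨ q = ⊥ := by
  have : Nontrivial A := hA.1
  have : IsArtinian R A := isArtinian_of_tower k inferInstance
  have : IsNoetherian R A := isNoetherian_of_tower k inferInstance
  have : IsArtinianRing (Module.End R A) := IsArtinianRing.of_finite k _
  have hE := Module.IsIndecomposable.isUnit_or_isNilpotent hA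
  have hact : IsBaseChangeAction k R A F := hsmul
  refine Module.isIndecomposable_of_isUnit_or_isNilpotent <|
    hact.isUnit_or_isNilpotent (Ring.jacobson _) IsSemiprimaryRing.isNilpotent fun f => ?_
  obtain ⟨c, hc⟩ := Module.End.exists_isNilpotent_sub_algebraMap (k := k) hE f
  exact ⟨c, mem_jacobson_of_isNilpotent hE hc⟩

/-- **Lemma (indecomposability is preserved by base change from an algebraically closed
field).** Suppose `k` is algebraically closed, `R` is a finite-dimensional `k`-algebra, and
`A` is a finite-dimensional indecomposable `R`-module.  Then for any field extension `F/k`,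
the base change `F ⊗_k A` is an indecomposable module over the `F`-algebra `F ⊗_k R`
(the module structure being the canonical one, characterized on pure tensors by
`(f ⊗ r) • (g ⊗ a) = (f*g) ⊗ (r • a)`). -/
theorem baseChange_indecomposable_of_isAlgClosed
    (k : Type*) [Field k] [IsAlgClosed k]
    (R : Type*) [Ring R] [Algebra k R] [FiniteDimensional k R]
    (A : Type*) [AddCommGroup A] [Module R A] [Module k A] [IsScalarTower k R A]
    [FiniteDimensional k A]
    (hA : Nontrivial A ∧ ∀ p q : Submodule R A, IsCompl p q → p = ⊥ ∨ q = ⊥)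
    (F : Type*) [Field F] [Algebra k F]
    [Module (F ⊗[k] R) (F ⊗[k] A)]
    (hsmul : ∀ (f g : F) (r : R) (a : A),
      (f ⊗ₜ[k] r : F ⊗[k] R) • (g ⊗ₜ[k] a : F ⊗[k] A) = (f * g) ⊗ₜ[k] (r • a)) :
    Nontrivial (F ⊗[k] A) ∧
      ∀ p q : Submodule (F ⊗[k] R) (F ⊗[k] A), IsCompl p q → p = ⊥ ∨ q = ⊥ :=
  baseChange_indecomposable_of_isAlgClosed_general k R A hA F hsmul
end

section
/- Let G be a finite group, k any field, and V a finite-dimensional faithful representation of G over k. Then the polynomials of degree at most |G| − 1 span k(V) as a k(V)^G-vector space; that is, D_span(G,V) ≤ |G| − 1. -/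
/-!
Every element of `k(V)` is a `k(V)^G`-multiple of a polynomial: multiply numerator and
denominator by the conjugates of the denominator, making the denominator invariant. Since
`[k(V) : k(V)^G] ≤ |G|`, among the prefix products `1, x₁, x₁x₂, …, x₁⋯x_{|G|}` of a monomial
`x₁⋯x_N` with `N ≥ |G|` there is a linear relation over `k(V)^G`; solving for the longest
prefix occurring in it and multiplying by the rest of the monomial expresses the monomial
through monomials of smaller degree, so induction on the degree brings every monomial below
`|G|`.
-/

open MvPolynomial

set_option synthInstance.maxHeartbeats 1000000
set_option maxHeartbeats 1000000

section

variable (k : Type*) [Field k] (n : ℕ) (G : Type*) [Group G] [Fintype G]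
  [MulSemiringAction G (MvPolynomial (Fin n) k)]
  [MulSemiringAction G (FractionRing (MvPolynomial (Fin n) k))]

local notation "𝔸" => MvPolynomial (Fin n) k
local notation "𝔽" => FractionRing (MvPolynomial (Fin n) k)
local notation "𝕂" => FixedPoints.subfield G (FractionRing (MvPolynomial (Fin n) k))
local notation "ιF" =>
  algebraMap (MvPolynomial (Fin n) k) (FractionRing (MvPolynomial (Fin n) k))

open Submodule Module

theorem exists_mem_span_image_Iio_of_not_linearIndependent {K V : Type*} [DivisionRing K]
    [AddCommGroup V] [Module K V] (v : ℕ → V) {m : ℕ}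
    (h : ¬ LinearIndependent K fun i : Fin m => v i) :
    ∃ j < m, v j ∈ span K (v '' Set.Iio j) := by
  induction m with
  | zero => exact absurd linearIndependent_empty_type h
  | succ m ih =>
    rw [linearIndependent_finSucc', not_and_or, not_not] at h
    rcases h with h | h
    · obtain ⟨j, hj, hmem⟩ := ih h
      exact ⟨j, by omega, hmem⟩
    · refine ⟨m, m.lt_succ_self, ?_⟩
      convert h using 3
      · ext x
        simp [Fin.init, Fin.exists_iff]
      · simp

section

variable {K F : Type*} [Field K] [CommRing F] [Algebra K F]

def shortProducts (S : Set F) (d : ℕ) : Set F :=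
  {x | ∃ l : List F, (∀ a ∈ l, a ∈ S) ∧ l.length < d ∧ l.prod = x}

theorem List.prod_mem_span_shortProducts [FiniteDimensional K F] {S : Set F} (l : List F)
    (hl : ∀ a ∈ l, a ∈ S) : l.prod ∈ Submodule.span K (shortProducts S (finrank K F)) := by
  induction h : l.length using Nat.strong_induction_on generalizing l with
  | _ N ih =>
  subst h
  by_cases hshort : l.length < finrank K F
  · exact subset_span ⟨l, hl, hshort, rfl⟩
  obtain ⟨j, hj, hmem⟩ := exists_mem_span_image_Iio_of_not_linearIndependent (K := K)
    (fun i => (l.take i).prod) (m := finrank K F + 1) fun hli => by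
      simpa using hli.fintype_card_le_finrank
  have hsplit : l.prod = (l.take j).prod * (l.drop j).prod := by
    rw [← List.prod_append, List.take_append_drop]
  have hmul := Submodule.mem_map_of_mem (f := LinearMap.mulRight K (l.drop j).prod) hmem
  rw [map_span, ← Set.image_comp] at hmul
  rw [hsplit]
  refine span_le.mpr ?_ hmul
  rintro _ ⟨i, hi : i < j, rfl⟩
  rw [Function.comp_apply, LinearMap.mulRight_apply, ← List.prod_append]
  refine ih _ ?_ _ (fun a ha => ?_) rfl
  · simp only [List.length_append, List.length_take, List.length_drop]
    omega
  · rcases List.mem_append.mp ha with h | h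
    exacts [hl a (List.mem_of_mem_take h), hl a (List.mem_of_mem_drop h)]

theorem Algebra.adjoin_le_span_shortProducts [FiniteDimensional K F] (S : Set F) :
    Subalgebra.toSubmodule (Algebra.adjoin K S) ≤ span K (shortProducts S (finrank K F)) := by
  rw [Algebra.adjoin_eq_span, span_le]
  intro x hx
  obtain ⟨l, hl, rfl⟩ := Submonoid.exists_list_of_mem_closure hx
  exact l.prod_mem_span_shortProducts hl

end

theorem MvPolynomial.list_prod_mem_image_totalDegree_le {σ R F : Type*} [CommSemiring R]
    [Semiring F] (f : MvPolynomial σ R →+* F) (l : List F)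
    (hl : ∀ a ∈ l, a ∈ Set.range (f ∘ X)) :
    l.prod ∈ f '' {p | p.totalDegree ≤ l.length} := by
  induction l with
  | nil => exact ⟨1, by simp, map_one f⟩
  | cons a t ih =>
    obtain ⟨i, rfl⟩ := hl a List.mem_cons_self
    obtain ⟨p, hp, hpt⟩ := ih fun b hb => hl b (List.mem_cons_of_mem _ hb)
    refine ⟨X i * p, ?_, by rw [map_mul, hpt, List.prod_cons, Function.comp_apply]⟩
    calc (X i * p).totalDegree ≤ (X i).totalDegree + p.totalDegree := totalDegree_mul _ _
      _ ≤ 1 + t.length := add_le_add (isHomogeneous_X R i).totalDegree_le hp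
      _ = t.length + 1 := add_comm _ _

theorem FixedPoints.span_range_algebraMap_eq_top {G A F : Type*} [Group G] [Fintype G]
    [CommRing A] [Nontrivial A] [MulSemiringAction G A] [Field F] [Algebra A F]
    [IsFractionRing A F] [MulSemiringAction G F]
    (hcomp : ∀ (g : G) (a : A), g • algebraMap A F a = algebraMap A F (g • a)) :
    span (FixedPoints.subfield G F) (Set.range (algebraMap A F)) = ⊤ := by
  classical
  refine eq_top_iff.mpr fun x _ => ?_
  obtain ⟨a, b, hb, rfl⟩ := IsFractionRing.div_surjective (A := A) x
  have hb0 : algebraMap A F b ≠ 0 := IsFractionRing.to_map_ne_zero_of_mem_nonZeroDivisors hb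
  set N : FixedPoints.subfield G F :=
    ⟨∏ g : G, g • algebraMap A F b, Finset.smul_prod_perm _⟩
  have hN : (N : F) = algebraMap A F b * ∏ g ∈ Finset.univ.erase (1 : G), g • algebraMap A F b := by
    show ∏ g : G, g • algebraMap A F b = _
    rw [← Finset.mul_prod_erase _ _ (Finset.mem_univ (1 : G)), one_smul]
  have hM0 : ∏ g ∈ Finset.univ.erase (1 : G), g • algebraMap A F b ≠ 0 :=
    Finset.prod_ne_zero_iff.mpr fun g _ => (smul_ne_zero_iff_ne g).mpr hb0
  have hx : algebraMap A F a / algebraMap A F b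
      = N⁻¹ • algebraMap A F (a * ∏ g ∈ Finset.univ.erase (1 : G), g • b) := by
    rw [Subfield.smul_def, smul_eq_mul, Subfield.coe_inv, map_mul, map_prod]
    simp only [← hcomp]
    rw [hN]
    field_simp
  rw [hx]
  exact smul_mem _ _ (subset_span ⟨_, rfl⟩)

theorem MvPolynomial.apply_mem_adjoin_range_X {σ R F G : Type*} [CommRing R] [Field F]
    [Group G] [MulSemiringAction G (MvPolynomial σ R)] [MulSemiringAction G F]
    [SMulCommClass G R (MvPolynomial σ R)] (f : MvPolynomial σ R →+* F)
    (hf : ∀ (g : G) (p : MvPolynomial σ R), g • f p = f (g • p)) (p : MvPolynomial σ R) :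
    f p ∈ Algebra.adjoin (FixedPoints.subfield G F) (Set.range (f ∘ X)) := by
  induction p using MvPolynomial.induction_on with
  | C c =>
    have hfixed : f (C c) ∈ FixedPoints.subfield G F := fun g => by
      rw [hf, C_eq_smul_one, smul_comm, smul_one]
    exact Subalgebra.algebraMap_mem _ (⟨f (C c), hfixed⟩ : FixedPoints.subfield G F)
  | add p q hp hq => exact map_add f p q ▸ add_mem hp hq
  | mul_X p i hp => exact map_mul f p (X i) ▸ mul_mem hp (Algebra.subset_adjoin ⟨i, rfl⟩)

theorem spanning_degree_le_card_sub_one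
    [SMulCommClass G k (MvPolynomial (Fin n) k)]
    (hcomp : ∀ (g : G) (p : 𝔸), g • (ιF p) = ιF (g • p)) :
    Submodule.span 𝕂 (ιF '' {p : 𝔸 | p.totalDegree ≤ Fintype.card G - 1}) = ⊤ ∧
    sInf {e : ℕ | Submodule.span 𝕂 (ιF '' {p : 𝔸 | p.totalDegree ≤ e}) = ⊤}
      ≤ Fintype.card G - 1 := by
  have hspan : Submodule.span 𝕂 (ιF '' {p : 𝔸 | p.totalDegree ≤ Fintype.card G - 1}) = ⊤ := by
    rw [eq_top_iff, ← FixedPoints.span_range_algebraMap_eq_top hcomp, Submodule.span_le]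
    rintro _ ⟨p, rfl⟩
    refine Submodule.span_mono ?_ <| Algebra.adjoin_le_span_shortProducts _ <|
      apply_mem_adjoin_range_X ιF hcomp p
    rintro _ ⟨l, hl, hlen, rfl⟩
    obtain ⟨q, hq : q.totalDegree ≤ l.length, hql⟩ := list_prod_mem_image_totalDegree_le ιF l hl
    have hrank := FixedPoints.finrank_le_card G 𝔽
    exact ⟨q, show q.totalDegree ≤ Fintype.card G - 1 by omega, hql⟩
  exact ⟨hspan, Nat.sInf_le hspan⟩

end
end

section
/- For each natural number d, let Ξ_d denote the restriction of the multiplication map Ξ to K[X_1,…,X_n]_{≤d}, so that the image of Ξ_d is the K-span in k(V) of the polynomials of degree at most d. If Ξ_d is not surjective onto k(V), then dim_K(im Ξ_{d+1}) ≥ dim_K(im Ξ_d) + 1; that is, the image strictly grows in the next degree. -/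
/-!
Let `V_d ⊆ k(V)` be the `K`-span of the polynomials of degree `≤ d`. These spaces increase with
`d`, and `x_i V_d ⊆ V_{d+1}`. If `V_{d+1} = V_d`, then `V_d` is stable under multiplication by
the coordinates, so it contains every polynomial. But the polynomials span `k(V)` over `K`:
`p / q = p r / N(q)`, where the norm `N(q) = ∏_g g q = q r` is `G`-invariant. Hence `V_d = k(V)`,
so when `Ξ_d` is not surjective `V_d ⊊ V_{d+1}` and the dimension grows.
-/

namespace MvPolynomial

variable {σ R K F : Type*} [CommSemiring R] [CommSemiring K] [CommSemiring F] [Algebra K F]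

theorem map_mem_of_forall_X_mul_mem (f : MvPolynomial σ R →+* F) (W : AddSubmonoid F)
    (hC : ∀ a, f (C a) ∈ W) (hX : ∀ i, ∀ w ∈ W, f (X i) * w ∈ W)
    (p : MvPolynomial σ R) : f p ∈ W := by
  induction p using MvPolynomial.induction_on with
  | C a => exact hC a
  | add p q hp hq => simpa only [map_add] using W.add_mem hp hq
  | mul_X p i hp => simpa only [map_mul, mul_comm] using hX i _ hp

variable (K) in
def totalDegreeSpan (f : MvPolynomial σ R →+* F) (d : ℕ) : Submodule K F :=
  Submodule.span K (f '' {p | p.totalDegree ≤ d})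

namespace totalDegreeSpan

variable (f : MvPolynomial σ R →+* F)

theorem monotone : Monotone (totalDegreeSpan K f) :=
  fun _ _ hde ↦ Submodule.span_mono <| Set.image_mono fun _ hp ↦ le_trans hp hde

theorem X_mul_mem_succ (i : σ) {d : ℕ} {w : F} (hw : w ∈ totalDegreeSpan K f d) :
    f (X i) * w ∈ totalDegreeSpan K f (d + 1) := by
  have hmap : (totalDegreeSpan K f d).map (LinearMap.mulLeft K (f (X i))) ≤
      totalDegreeSpan K f (d + 1) := by
    rw [totalDegreeSpan, Submodule.map_span, Submodule.span_le]
    rintro _ ⟨_, ⟨p, hp, rfl⟩, rfl⟩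
    refine Submodule.subset_span ⟨X i * p, ?_, by simp⟩
    calc (X i * p).totalDegree ≤ (X i : MvPolynomial σ R).totalDegree + p.totalDegree :=
          totalDegree_mul _ _
      _ ≤ 1 + d := add_le_add ((totalDegree_monomial_le _ _).trans (by simp)) hp
      _ = d + 1 := add_comm 1 d
  exact hmap ⟨w, hw, rfl⟩

theorem map_mem_of_succ_eq {d : ℕ} (h : totalDegreeSpan K f (d + 1) = totalDegreeSpan K f d)
    (p : MvPolynomial σ R) : f p ∈ totalDegreeSpan K f d :=
  map_mem_of_forall_X_mul_mem f (totalDegreeSpan K f d).toAddSubmonoid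
    (fun a ↦ Submodule.subset_span ⟨C a, by simp, rfl⟩)
    (fun i _ hw ↦ h ▸ X_mul_mem_succ f i hw) p

end totalDegreeSpan

end MvPolynomial

theorem IsFractionRing.span_fixedPoints_range_algebraMap_eq_top {A F H : Type*} [CommRing A]
    [Field F] [Algebra A F] [IsFractionRing A F] [Group H] [Fintype H] [MulSemiringAction H A]
    [MulSemiringAction H F]
    (hcomp : ∀ (g : H) (a : A), g • algebraMap A F a = algebraMap A F (g • a)) :
    Submodule.span (FixedPoints.subfield H F) (Set.range (algebraMap A F)) = ⊤ := by
  refine eq_top_iff.2 fun x _ ↦ ?_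
  obtain ⟨a, b, hb, rfl⟩ := IsFractionRing.div_surjective (A := A) x
  set ι := algebraMap A F
  obtain ⟨r, hr⟩ : b ∣ ∏ g : H, g • b := by
    simpa using Finset.dvd_prod_of_mem (fun g : H ↦ g • b) (Finset.mem_univ 1)
  have hnorm : ι (∏ g : H, g • b) = ∏ g : H, g • ι b := by
    simp only [map_prod, hcomp]
  have : Nontrivial A := ι.domain_nontrivial
  have hb0 : ι b ≠ 0 := IsFractionRing.to_map_ne_zero_of_mem_nonZeroDivisors hb
  have hnorm0 : ι (∏ g : H, g • b) ≠ 0 := by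
    rw [hnorm]
    exact Finset.prod_ne_zero_iff.2 fun g _ ↦ (smul_ne_zero_iff_ne g).2 hb0
  have hr0 : ι r ≠ 0 := right_ne_zero_of_mul (map_mul ι b r ▸ hr ▸ hnorm0)
  let c : FixedPoints.subfield H F :=
    ⟨(ι (∏ g : H, g • b))⁻¹, fun g ↦ by rw [smul_inv'', hnorm, Finset.smul_prod_perm]⟩
  have hx : ι a / ι b = c • ι (a * r) := by
    change _ = (ι (∏ g : H, g • b))⁻¹ * _
    rw [hr, ← div_eq_inv_mul, map_mul, map_mul, mul_div_mul_right _ _ hr0]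
  rw [hx]
  exact Submodule.smul_mem _ c (Submodule.subset_span ⟨a * r, rfl⟩)

open MvPolynomial

section

variable (k : Type*) [Field k] (n : ℕ) (G : Type*) [Group G] [Fintype G]
  [MulSemiringAction G (MvPolynomial (Fin n) k)]
  [MulSemiringAction G (FractionRing (MvPolynomial (Fin n) k))]

local notation "𝔸" => MvPolynomial (Fin n) k
local notation "𝔽" => FractionRing (MvPolynomial (Fin n) k)
local notation "𝕂" => FixedPoints.subfield G (FractionRing (MvPolynomial (Fin n) k))
local notation "ιF" =>
  algebraMap (MvPolynomial (Fin n) k) (FractionRing (MvPolynomial (Fin n) k))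

theorem image_of_Xi_strictly_grows
    (hcomp : ∀ (g : G) (p : 𝔸), g • (ιF p) = ιF (g • p))
    (d : ℕ)
    (hnot : Submodule.span 𝕂 (ιF '' {p : 𝔸 | p.totalDegree ≤ d}) ≠ ⊤) :
    Module.finrank 𝕂 (Submodule.span 𝕂 (ιF '' {p : 𝔸 | p.totalDegree ≤ d})) + 1
      ≤ Module.finrank 𝕂
        (Submodule.span 𝕂 (ιF '' {p : 𝔸 | p.totalDegree ≤ d + 1})) := by
  let S := totalDegreeSpan 𝕂 ιF
  suffices hlt : S d < S (d + 1) from Submodule.finrank_lt_finrank_of_lt hlt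
  refine lt_of_le_of_ne (totalDegreeSpan.monotone _ d.le_succ) fun heq ↦ hnot ?_
  rw [eq_top_iff, ← IsFractionRing.span_fixedPoints_range_algebraMap_eq_top hcomp,
    Submodule.span_le]
  rintro _ ⟨p, rfl⟩
  exact totalDegreeSpan.map_mem_of_succ_eq _ heq.symm p

end
end

section
/- Assume k is algebraically closed, char k does not divide |G|, and G is abelian. If W ⊆ k[V] is any kG-submodule isomorphic to the regular representation kG, then any k-basis of W is a K-basis of k(V). Consequently D_reg(G,V) = D_span(G,V). -/
/-!
For abelian `G` over an algebraically closed `k` of characteristic prime to `|G|` there are exactly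
`|G|` characters `χ : G → kˣ`, and a `kG`-module is regular iff every character occurs once. The
projections `∑ g, χ g⁻¹ • g • w` of a generator `w` of a regular submodule are nonzero
`χ`-eigenvectors; by Dedekind's lemma eigenvectors for distinct characters are independent over
`K = k(V)^G`, and `[k(V) : K] = |G|`, so they form a `K`-basis of `k(V)`. A `k`-basis of `W`
`K`-spans them and has `|G|` elements, hence is a `K`-basis as well.

Conversely, if the polynomials of degree `≤ d` span `k(V)` over `K`, Artin's independence of the
automorphisms `g` shows that no `χ`-projection kills all of them. This gives a `χ`-eigenvector of
degree `≤ d` for every `χ`, and their sum generates a regular submodule because the characters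
form a basis of the functions `G → k`.
-/

namespace FixedPoints

variable {G L : Type*} [Field L]

theorem linearIndependent_of_smul_eq_mul [Monoid G] [MulSemiringAction G L] {ι : Type*}
    {χ : ι → G →* L} (hχ : Function.Injective χ) {x : ι → L} (hx0 : ∀ i, x i ≠ 0)
    (hx : ∀ i g, g • x i = χ i g * x i) : LinearIndependent (subfield G L) x := by
  classical
  rw [linearIndependent_iff']
  intro t f hf i hi
  have hded := linearIndependent_iff'.mp ((linearIndependent_monoidHom G L).comp χ hχ) t
    (fun j => (f j : L) * x j) ?_ i hi
  · exact_mod_cast (mul_eq_zero.mp hded).resolve_right (hx0 i)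
  · funext g
    have := congrArg (g • ·) hf
    simp only [smul_zero, Finset.smul_sum] at this
    simp only [Finset.sum_apply, Pi.smul_apply, Function.comp_apply, smul_eq_mul, Pi.zero_apply]
    rw [← this]
    refine Finset.sum_congr rfl fun j _ => ?_
    rw [Subfield.smul_def, smul_eq_mul, smul_mul', (f j).2 g, hx]
    ring

theorem exists_sum_mul_smul_ne_zero [Group G] [Fintype G] [MulSemiringAction G L]
    [FaithfulSMul G L] {a : G → L} (ha : a ≠ 0) {S : Set L}
    (hS : Submodule.span (subfield G L) S = ⊤) : ∃ x ∈ S, ∑ g, a g * g • x ≠ 0 := by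
  by_contra! h
  refine ha (funext (Fintype.linearIndependent_iff.mp ((linearIndependent_toLinearMap
    (subfield G L) L L).comp _ (MulSemiringAction.toAlgHom_injective _ L)) a ?_))
  exact LinearMap.ext_on hS fun x hx => by simpa using h x hx

end FixedPoints

section Characters

variable {k G M : Type*} [Field k] [Group G] [Fintype G]

/-- The `χ`-isotypic projection, up to the factor `|G|`. -/
def charProj [AddCommMonoid M] [Module k M] [DistribMulAction G M] (χ : G →* kˣ) (v : M) : M :=
  ∑ g, (χ g⁻¹ : k) • g • v

theorem smul_charProj [AddCommMonoid M] [Module k M] [DistribMulAction G M]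
    [SMulCommClass G k M] (χ : G →* kˣ) (v : M) (h : G) :
    h • charProj χ v = (χ h : k) • charProj χ v := by
  conv_rhs => rw [charProj, ← Equiv.sum_comp (Equiv.mulLeft h)]
  simp only [charProj, Finset.smul_sum]
  refine Finset.sum_congr rfl fun g _ => ?_
  rw [smul_comm h, smul_smul, ← mul_smul]
  congr 1
  simp only [Equiv.coe_mulLeft, mul_inv_rev, map_mul, map_inv, Units.val_mul]
  rw [mul_left_comm, Units.mul_inv, mul_one]

theorem charProj_mem [AddCommMonoid M] [Module k M] [DistribMulAction G M] (χ : G →* kˣ)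
    {v : M} {N : Submodule k M} (hv : ∀ g : G, g • v ∈ N) : charProj χ v ∈ N :=
  N.sum_mem fun g _ => N.smul_mem _ (hv g)

theorem charProj_ne_zero [AddCommGroup M] [Module k M] [DistribMulAction G M] (χ : G →* kˣ)
    {v : M} (hv : LinearIndependent k fun g : G => g • v) : charProj χ v ≠ 0 := fun h0 => by
  simpa using Fintype.linearIndependent_iff.mp hv _ h0 1

variable [Fintype (G →* kˣ)]

theorem eq_zero_of_forall_sum_mul_char_eq_zero (hcard : Fintype.card (G →* kˣ) = Fintype.card G)
    {c : G → k} (hc : ∀ χ : G →* kˣ, ∑ g, c g * χ g = 0) : c = 0 := by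
  have hli : LinearIndependent k fun (χ : G →* kˣ) (g : G) => (χ g : k) :=
    (linearIndependent_monoidHom G k).comp (fun χ => (Units.coeHom k).comp χ)
      fun χ ψ h => MonoidHom.ext fun g => Units.ext (DFunLike.congr_fun h g)
  have hspan := hli.span_eq_top_of_card_eq_finrank
    (by rw [hcard, Module.finrank_fintype_fun_eq_card])
  have hℓ : ∑ g, c g • LinearMap.proj (R := k) (φ := fun _ : G => k) g = 0 :=
    LinearMap.ext_on_range hspan fun χ => by simpa using hc χ
  classical
  funext h
  simpa [Pi.single_apply] using LinearMap.congr_fun hℓ (Pi.single h 1)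

theorem linearIndependent_smul_sum_of_smul_eq [AddCommGroup M] [Module k M]
    [DistribMulAction G M] [SMulCommClass G k M]
    (hcard : Fintype.card (G →* kˣ) = Fintype.card G) {u : (G →* kˣ) → M}
    (hu : LinearIndependent k u) (heig : ∀ χ (g : G), g • u χ = (χ g : k) • u χ) :
    LinearIndependent k fun g : G => g • ∑ χ, u χ := by
  rw [Fintype.linearIndependent_iff]
  intro c hc
  have hsum : ∑ χ, (∑ g, c g * χ g) • u χ = 0 := by
    rw [← hc]
    simp only [Finset.sum_smul, Finset.smul_sum, heig, smul_smul]
    exact Finset.sum_comm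
  exact congrFun (eq_zero_of_forall_sum_mul_char_eq_zero hcard fun χ =>
    Fintype.linearIndependent_iff.mp hu _ hsum χ)

end Characters

theorem smul_mem_span_range_smul {k G M : Type*} [Semiring k] [Monoid G] [AddCommMonoid M]
    [Module k M] [DistribMulAction G M] [SMulCommClass G k M] {w p : M}
    (hp : p ∈ Submodule.span k (Set.range fun h : G => h • w)) (g : G) :
    g • p ∈ Submodule.span k (Set.range fun h : G => h • w) := by
  induction hp using Submodule.span_induction with
  | mem x hx =>
    obtain ⟨h, rfl⟩ := hx
    exact Submodule.subset_span ⟨g * h, mul_smul g h w⟩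
  | zero => simp
  | add x y _ _ hx hy => simpa only [smul_add] using add_mem hx hy
  | smul c x _ hx => simpa only [smul_comm g c] using Submodule.smul_mem _ c hx

open MvPolynomial

namespace MvPolynomial

theorem totalDegree_smul_le_of_isHomogeneous_smul_X_s16 {R σ G : Type*} [CommSemiring R]
    [Fintype σ] [Monoid G] [MulSemiringAction G (MvPolynomial σ R)]
    [SMulCommClass G R (MvPolynomial σ R)]
    (hlin : ∀ (g : G) (i : σ), (g • (X i : MvPolynomial σ R)).IsHomogeneous 1)
    (g : G) (p : MvPolynomial σ R) : (g • p).totalDegree ≤ p.totalDegree := by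
  classical
  have hgp : g • p = aeval (fun i => g • (X i : MvPolynomial σ R)) p := by
    rw [← MulSemiringAction.toAlgHom_apply R, aeval_unique (MulSemiringAction.toAlgHom R _ g)]
    rfl
  rw [hgp, aeval_def, eval₂_eq']
  refine (totalDegree_finsetSum _ _).trans (Finset.sup_le fun d hd => ?_)
  have hprod : (∏ i, (g • (X i : MvPolynomial σ R)) ^ d i).totalDegree ≤ ∑ i, d i := by
    simpa using (IsHomogeneous.prod _ _ _ fun i _ => (hlin g i).pow (d i)).totalDegree_le
  have hd : ∑ i, d i ≤ p.totalDegree := by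
    simpa [Finsupp.sum_fintype] using le_totalDegree hd
  calc _ ≤ (C (coeff d p) : MvPolynomial σ R).totalDegree + _ := totalDegree_mul _ _
    _ ≤ p.totalDegree := by rw [totalDegree_C, zero_add]; exact hprod.trans hd

end MvPolynomial

section FixedField

variable {k A F G : Type*} [Field k] [CommRing A] [Algebra k A] [Field F] [Algebra A F]
  [Algebra k F] [IsScalarTower k A F] [Group G] [MulSemiringAction G A] [MulSemiringAction G F]

theorem faithfulSMul_of_smul_algebraMap [FaithfulSMul A F]
    (hfaithful : ∀ g : G, (∀ p : A, g • p = p) → g = 1)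
    (hcomp : ∀ (g : G) (p : A), g • algebraMap A F p = algebraMap A F (g • p)) :
    FaithfulSMul G F := by
  refine ⟨fun {g₁ g₂} h => inv_mul_eq_one.mp (hfaithful _ fun p => ?_)⟩
  refine FaithfulSMul.algebraMap_injective A F ?_
  rw [← hcomp, mul_smul, ← h, inv_smul_smul]

variable [SMulCommClass G k A]

theorem algebraMap_mem_fixedPoints
    (hcomp : ∀ (g : G) (p : A), g • algebraMap A F p = algebraMap A F (g • p)) (c : k) :
    algebraMap k F c ∈ FixedPoints.subfield G F := fun g => by
  rw [IsScalarTower.algebraMap_apply k A F, hcomp, smul_algebraMap]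

theorem algebraMap_smul_eq_smul
    (hcomp : ∀ (g : G) (p : A), g • algebraMap A F p = algebraMap A F (g • p))
    (c : k) (p : A) :
    algebraMap A F (c • p) =
      (⟨algebraMap k F c, algebraMap_mem_fixedPoints hcomp c⟩ : FixedPoints.subfield G F) •
        algebraMap A F p := by
  rw [Algebra.smul_def, map_mul, ← IsScalarTower.algebraMap_apply]
  rfl

theorem algebraMap_mem_span_image
    (hcomp : ∀ (g : G) (p : A), g • algebraMap A F p = algebraMap A F (g • p))
    {s : Set A} {p : A} (hp : p ∈ Submodule.span k s) :
    algebraMap A F p ∈ Submodule.span (FixedPoints.subfield G F) (algebraMap A F '' s) := by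
  induction hp using Submodule.span_induction with
  | mem x hx => exact Submodule.subset_span ⟨x, hx, rfl⟩
  | zero => simp
  | add x y _ _ hx hy => simpa only [map_add] using add_mem hx hy
  | smul c x _ hx => simpa only [algebraMap_smul_eq_smul hcomp] using Submodule.smul_mem _ _ hx

theorem linearIndependent_of_linearIndependent_algebraMap
    (hcomp : ∀ (g : G) (p : A), g • algebraMap A F p = algebraMap A F (g • p))
    {ι : Type*} {u : ι → A}
    (hu : LinearIndependent (FixedPoints.subfield G F) fun i => algebraMap A F (u i)) :
    LinearIndependent k u := by
  rw [linearIndependent_iff'] at hu ⊢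
  intro t d hd i hi
  have := hu t (fun j => (⟨algebraMap k F (d j), algebraMap_mem_fixedPoints hcomp _⟩ :
      FixedPoints.subfield G F))
    (by simpa only [map_sum, algebraMap_smul_eq_smul hcomp, map_zero]
      using congrArg (algebraMap A F) hd) i hi
  simpa using congrArg Subtype.val this

theorem linearIndependent_algebraMap_of_smul_eq [FaithfulSMul A F]
    (hcomp : ∀ (g : G) (p : A), g • algebraMap A F p = algebraMap A F (g • p))
    {u : (G →* kˣ) → A} (hu0 : ∀ χ, u χ ≠ 0)
    (heig : ∀ χ (g : G), g • u χ = (χ g : k) • u χ) :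
    LinearIndependent (FixedPoints.subfield G F) fun χ => algebraMap A F (u χ) :=
  FixedPoints.linearIndependent_of_smul_eq_mul
    (χ := fun χ => (algebraMap k F : k →* F).comp ((Units.coeHom k).comp χ))
    (fun χ ψ h => MonoidHom.ext fun g => Units.ext <|
      (algebraMap k F).injective (DFunLike.congr_fun h g))
    (fun χ => (map_ne_zero_iff _ (FaithfulSMul.algebraMap_injective A F)).mpr (hu0 χ))
    fun χ g => by rw [hcomp, heig, algebraMap_smul_eq_smul hcomp]; rfl

theorem algebraMap_charProj [Fintype G]
    (hcomp : ∀ (g : G) (p : A), g • algebraMap A F p = algebraMap A F (g • p))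
    (χ : G →* kˣ) (p : A) :
    algebraMap A F (charProj χ p) =
      ∑ g, algebraMap k F (χ g⁻¹) * g • algebraMap A F p := by
  simp only [charProj, map_sum, algebraMap_smul_eq_smul hcomp, hcomp]
  rfl

variable [FaithfulSMul A F] [Fintype G] [FaithfulSMul G F] [Fintype (G →* kˣ)]

theorem span_algebraMap_image_eq_top_of_regular
    (hcomp : ∀ (g : G) (p : A), g • algebraMap A F p = algebraMap A F (g • p))
    (hcard : Fintype.card (G →* kˣ) = Fintype.card G) {w : A}
    (hw : LinearIndependent k fun g : G => g • w) {s : Set A}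
    (hs : Submodule.span k s = Submodule.span k (Set.range fun g : G => g • w)) :
    Submodule.span (FixedPoints.subfield G F) (algebraMap A F '' s) = ⊤ := by
  have hli := linearIndependent_algebraMap_of_smul_eq (F := F) hcomp
    (fun χ => charProj_ne_zero χ hw) fun χ g => smul_charProj χ w g
  rw [eq_top_iff, ← hli.span_eq_top_of_card_eq_finrank
    (by rw [hcard, FixedPoints.finrank_eq_card]), Submodule.span_le]
  rintro _ ⟨χ, rfl⟩
  refine algebraMap_mem_span_image (k := k) hcomp ?_
  rw [hs]
  exact charProj_mem χ fun g => Submodule.subset_span ⟨g, rfl⟩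

theorem linearIndependent_algebraMap_of_regular
    (hcomp : ∀ (g : G) (p : A), g • algebraMap A F p = algebraMap A F (g • p))
    (hcard : Fintype.card (G →* kˣ) = Fintype.card G) {w : A}
    (hw : LinearIndependent k fun g : G => g • w) {s : Set A}
    (hsli : LinearIndependent k fun x : s => (x : A))
    (hs : Submodule.span k s = Submodule.span k (Set.range fun g : G => g • w)) :
    LinearIndependent (FixedPoints.subfield G F) fun x : s => algebraMap A F x := by
  have : Finite s := hsli.finite_of_le_span_finite _ (Set.range fun g : G => g • w)
    (by simp [← hs, Submodule.subset_span])
  let := Fintype.ofFinite s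
  have hcard_s : Fintype.card s = Fintype.card G := by
    rw [← Set.toFinset_card, ← finrank_span_set_eq_card hsli, hs, finrank_span_eq_card hw]
  refine linearIndependent_of_top_le_span_of_card_eq_finrank ?_
    (by rw [hcard_s, FixedPoints.finrank_eq_card])
  rw [← Set.image_eq_range, span_algebraMap_image_eq_top_of_regular hcomp hcard hw hs]

theorem exists_regular_le_of_span_eq_top
    (hcomp : ∀ (g : G) (p : A), g • algebraMap A F p = algebraMap A F (g • p))
    (hcard : Fintype.card (G →* kˣ) = Fintype.card G) {N : Submodule k A}
    (hN : ∀ g : G, ∀ p ∈ N, g • p ∈ N)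
    (hspan : Submodule.span (FixedPoints.subfield G F) (algebraMap A F '' N) = ⊤) :
    ∃ W ≤ N, (∀ g : G, ∀ p ∈ W, g • p ∈ W) ∧
      ∃ w ∈ W, LinearIndependent k (fun g : G => g • w) ∧
        Submodule.span k (Set.range fun g : G => g • w) = W := by
  have hex : ∀ χ : G →* kˣ, ∃ p ∈ N, charProj χ p ≠ 0 := by
    intro χ
    obtain ⟨_, ⟨p, hp, rfl⟩, hne⟩ := FixedPoints.exists_sum_mul_smul_ne_zero
      (a := fun g => algebraMap k F (χ g⁻¹)) (fun h => by simpa using congrFun h 1) hspan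
    exact ⟨p, hp, fun h0 => hne (by rw [← algebraMap_charProj hcomp, h0, map_zero])⟩
  choose p hpN hp0 using hex
  have heig : ∀ χ (g : G), g • charProj χ (p χ) = (χ g : k) • charProj χ (p χ) :=
    fun χ g => smul_charProj χ (p χ) g
  set w := ∑ χ, charProj χ (p χ)
  have hwN : w ∈ N := N.sum_mem fun χ _ => charProj_mem χ fun g => hN g _ (hpN χ)
  refine ⟨_, Submodule.span_le.mpr (Set.range_subset_iff.mpr fun g => hN g w hwN),
    fun g _ hp => smul_mem_span_range_smul hp g, w, Submodule.subset_span ⟨1, one_smul G w⟩,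
    ?_, rfl⟩
  exact linearIndependent_smul_sum_of_smul_eq hcard
    (linearIndependent_of_linearIndependent_algebraMap hcomp
      (linearIndependent_algebraMap_of_smul_eq (F := F) hcomp hp0 heig)) heig

end FixedField

section

variable (k : Type*) [Field k] (n : ℕ) (G : Type*) [Group G] [Fintype G]
  [MulSemiringAction G (MvPolynomial (Fin n) k)]
  [MulSemiringAction G (FractionRing (MvPolynomial (Fin n) k))]

local notation "𝔸" => MvPolynomial (Fin n) k
local notation "𝔽" => FractionRing (MvPolynomial (Fin n) k)
local notation "𝕂" => FixedPoints.subfield G (FractionRing (MvPolynomial (Fin n) k))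
local notation "ιF" =>
  algebraMap (MvPolynomial (Fin n) k) (FractionRing (MvPolynomial (Fin n) k))

/-- **Lemma (abelian case: `D_reg = D_span`).** Assume `k` is algebraically closed,
`char k ∤ |G|`, and `G` is abelian.  If `W ⊆ k[V]` is any `kG`-submodule isomorphic to the
regular representation `kG` (witnessed by a normal-basis element), then any `k`-basis of `W`
is a `K = k(V)^G`-basis of `k(V)`.  Consequently `D_reg(G,V) = D_span(G,V)`. -/
theorem abelian_regular_basis_is_K_basis_and_Dreg_eq_Dspan
    [IsAlgClosed k]
    [SMulCommClass G k (MvPolynomial (Fin n) k)]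
    (hlin : ∀ (g : G) (i : Fin n), ((g • (X i : 𝔸)).IsHomogeneous 1))
    (hfaithful : ∀ g : G, (∀ p : 𝔸, g • p = p) → g = 1)
    (hcomp : ∀ (g : G) (p : 𝔸), g • (ιF p) = ιF (g • p))
    (hchar : (Fintype.card G : k) ≠ 0)
    (hab : ∀ a b : G, a * b = b * a) :
    (∀ W : Submodule k 𝔸,
      (∀ (g : G), ∀ p ∈ W, g • p ∈ W) →
      (∃ w₀ ∈ W, LinearIndependent k (fun g : G => g • w₀) ∧
        Submodule.span k (Set.range fun g : G => g • w₀) = W) →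
      ∀ s : Set 𝔸, s ⊆ (W : Set 𝔸) →
        LinearIndependent k (fun x : s => (x : 𝔸)) →
        Submodule.span k s = W →
        (LinearIndependent 𝕂 (fun x : s => ιF (x : 𝔸)) ∧
          Submodule.span 𝕂 (ιF '' s) = ⊤)) ∧
    sInf {e : ℕ | ∃ W : Submodule k 𝔸,
        W ≤ MvPolynomial.restrictTotalDegree (Fin n) k e ∧
        (∀ (g : G), ∀ p ∈ W, g • p ∈ W) ∧
        (∃ w₀ ∈ W, LinearIndependent k (fun g : G => g • w₀) ∧
          Submodule.span k (Set.range fun g : G => g • w₀) = W)}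
      = sInf {e : ℕ | Submodule.span 𝕂 (ιF '' {p : 𝔸 | p.totalDegree ≤ e}) = ⊤} := by
  let : CommGroup G := { ‹Group G› with mul_comm := hab }
  have : NeZero (Monoid.exponent G : k) :=
    ⟨fun h => hchar (zero_dvd_iff.mp (h ▸ Nat.cast_dvd_cast Group.exponent_dvd_card))⟩
  have := faithfulSMul_of_smul_algebraMap hfaithful hcomp
  let : Fintype (G →* kˣ) := Fintype.ofFinite _
  have hcard : Fintype.card (G →* kˣ) = Fintype.card G := by
    simpa only [Nat.card_eq_fintype_card] using
      CommGroup.card_monoidHom_of_hasEnoughRootsOfUnity G k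
  have hdeg (e : ℕ) : {p : 𝔸 | p.totalDegree ≤ e} = restrictTotalDegree (Fin n) k e :=
    Set.ext fun p => (mem_restrictTotalDegree _ _ p).symm
  have hstable (e : ℕ) (g : G) (p : 𝔸) (hp : p ∈ restrictTotalDegree (Fin n) k e) :
      g • p ∈ restrictTotalDegree (Fin n) k e := by
    rw [mem_restrictTotalDegree] at hp ⊢
    exact (totalDegree_smul_le_of_isHomogeneous_smul_X_s16 hlin g p).trans hp
  refine ⟨fun W _ ⟨w, _, hw, hwW⟩ s _ hsli hs => ?_,
    congrArg sInf (Set.ext fun e => ⟨?_, ?_⟩)⟩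
  · rw [← hwW] at hs
    exact ⟨linearIndependent_algebraMap_of_regular hcomp hcard hw hsli hs,
      span_algebraMap_image_eq_top_of_regular hcomp hcard hw hs⟩
  · rintro ⟨W, hWe, -, w, -, hw, hwW⟩
    rw [Set.mem_ofPred_eq, eq_top_iff, ← span_algebraMap_image_eq_top_of_regular hcomp hcard hw
      (s := W) (by rw [hwW, Submodule.span_eq]), hdeg]
    exact Submodule.span_mono (Set.image_mono hWe)
  · intro hspan
    rw [Set.mem_ofPred_eq, hdeg] at hspan
    exact exists_regular_le_of_span_eq_top hcomp hcard (hstable e) hspan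

end
end
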